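/- arXiv:2312.14128 — 5 statements merged into one kernel-verified Lean document; each statement's English description precedes it below -/
import Mathlib

section
/- Let (Γ^μ_{αβ}, F^μ_{αi}, D^μ_{ij}, E^i_{αβ}, B^k_{αi}, H^i_{jk}) be any real arrays satisfying the torsion-free symmetry conditions and the six metric-compatibility equations for the data (g, h, A, Dg, Dh, DA). Then these arrays are uniquely determined and are given by the explicit formulas: E^k_{αβ} = −(1/2) h^{ki} (DA_{α,iβ} + DA_{β,iα} − 2 A_{iμ} Γ^μ_{αβ}); F^μ_{αi} = (1/2) g̃^{βμ} ( −(DA_{α,iβ} − DA_{β,iα}) + h^{jk} A_{kβ} (Dh_{α,ij} − A_{lα} ε_{ijl}) ); B^k_{αi} = (1/2) h̃^{jk} ( g^{μβ} A_{jμ} (DA_{α,iβ} − DA_{β,iα}) + A_{lα} ε_{ijl} − Dh_{α,ij} ); D^μ_{ij} = (1/2) g̃^{μα} ( Dh_{α,ij} − A_{kα} h^{mk} (h_{ni} ε_{jmn} + h_{nj} ε_{imn}) ); H^l_{ik} = (1/2) h̃^{jl} ( h_{ni} ε_{kjn} + h_{nk} ε_{ijn} − A_{jμ} g^{μα} Dh_{α,ik}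 ) − (1/2) ε_{lik}; Γ^σ_{μν} = Γ̃^σ_{μν} + (1/2) g̃^{σρ} ( A_{μi}(C_{ν,ρ}{}^i − C_{ρ,ν}{}^i) + A_{νi}(C_{μ,ρ}{}^i − C_{ρ,μ}{}^i) − A_{iμ} A_{jν} h^{ik} h^{jl} Dh_{ρ,kl} ), where C_{α,β}{}^i := h^{ij} DA_{α,jβ} − A_{jβ} h^{ik} h^{jl} Dh_{α,kl}. -/
/-!
For fixed free indices the compatibility equations are linear systems. Symmetrising (2) in
`α, β` and subtracting (3) gives `h E` in terms of `Γ`; antisymmetrising (2) and adding (3),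
and combining (4) with (5) and the torsion condition, gives the block system
`g F + Aᵀ B = P`, `A F + h B = Q`. Equations (5) and (6) give the same block system for
`(D, H + ε/2)`, where (6) is solved as a tensor antisymmetric in its outer indices whose
antisymmetric part in the last two indices is the torsion `h ε`.

Eliminating the lower unknown of such a system leaves the Schur complement
`g̃ = g - Aᵀ h⁻¹ A` acting on the upper one, which gives `F` and `D`. Eliminating the upper
unknown leaves `h - A g⁻¹ Aᵀ`, whose inverse is `h̃` by the Woodbury identity, which gives `B`
and `H`. Finally, substituting `E` into (1) turns it, up to known terms, into the usual
metric-compatibility equation for the torsion-free `Γ` with metric `g̃`, which the Christoffel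
formula inverts.
-/

noncomputable section

/-- The totally antisymmetric Levi-Civita symbol on three indices with ε₀₁₂ = 1
(indices written 1,2,3 in the paper). -/
def eps (i j k : Fin 3) : ℝ :=
  ((((i : ℤ) - (j : ℤ)) * ((j : ℤ) - (k : ℤ)) * ((k : ℤ) - (i : ℤ))) / 2 : ℤ)

open Matrix

namespace Matrix

theorem isSymm_transpose_mul_mul {m n R : Type*} [Fintype m] [CommRing R] {M : Matrix m m R}
    (hM : M.IsSymm) (A : Matrix m n R) : (Aᵀ * M * A).IsSymm := by
  rw [IsSymm, transpose_mul, transpose_mul, transpose_transpose, hM.eq, Matrix.mul_assoc]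

variable {m n R : Type*} [Fintype m] [Fintype n] [CommRing R]

theorem isSymm_add_mul_mul_mul_transpose_mul {h : Matrix m m R} {G : Matrix n n R}
    (hh : h.IsSymm) (hG : G.IsSymm) (A : Matrix m n R) : (h + h * A * G * Aᵀ * h).IsSymm := by
  refine hh.add ?_
  simpa only [transpose_mul, transpose_transpose, hh.eq, Matrix.mul_assoc] using
    isSymm_transpose_mul_mul hG (Aᵀ * h)

theorem mul_eq_one_of_sum_mul_eq_ite [DecidableEq n] {M N : Matrix n n R}
    (h : ∀ i j, ∑ k, M i k * N k j = if i = j then 1 else 0) : M * N = 1 := by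
  ext i j
  rw [mul_apply, one_apply, h]

theorem eq_mulVec_of_mul_eq_one [DecidableEq n] {M N : Matrix n n R} (hNM : N * M = 1)
    {x w : n → R} (h : M *ᵥ x = w) : x = N *ᵥ w := by
  rw [← h, mulVec_mulVec, hNM, one_mulVec]

theorem IsSymm.of_mul_eq_one [DecidableEq n] {M N : Matrix n n R} (hM : M.IsSymm)
    (hNM : N * M = 1) : N.IsSymm :=
  inv_eq_left_inv hNM ▸ hM.inv

theorem schur_mulVec_eq [DecidableEq m] {g : Matrix n n R} {A : Matrix m n R}
    {h hinv : Matrix m m R} (hh : hinv * h = 1) {x p : n → R} {y q : m → R}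
    (h₁ : g *ᵥ x + Aᵀ *ᵥ y = p) (h₂ : A *ᵥ x + h *ᵥ y = q) :
    (g - Aᵀ * hinv * A) *ᵥ x = p - Aᵀ *ᵥ (hinv *ᵥ q) := by
  have hy : y = hinv *ᵥ (q - A *ᵥ x) := eq_mulVec_of_mul_eq_one hh (by rw [← h₂]; abel)
  rw [← h₁, hy, sub_mulVec, mulVec_sub, mulVec_sub, ← mulVec_mulVec, ← mulVec_mulVec]
  abel

theorem woodbury_mul_eq_one [DecidableEq m] [DecidableEq n] {g ginv G Ginv : Matrix n n R}
    {A : Matrix m n R} {h hinv : Matrix m m R}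
    (hh : hinv * h = 1) (hg : g * ginv = 1) (hG : G = g - Aᵀ * hinv * A) (hGinv : Ginv * G = 1) :
    (hinv + hinv * A * Ginv * Aᵀ * hinv) * (h - A * ginv * Aᵀ) = 1 := by
  have key : Ginv * (Aᵀ * hinv * A) * ginv = Ginv - ginv := by
    rw [show Aᵀ * hinv * A = g - G by rw [hG]; abel, Matrix.mul_sub, Matrix.sub_mul, hGinv,
      Matrix.mul_assoc, hg, Matrix.mul_one, Matrix.one_mul]
  calc (hinv + hinv * A * Ginv * Aᵀ * hinv) * (h - A * ginv * Aᵀ)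
      = hinv * h + hinv * A * Ginv * Aᵀ * (hinv * h) - hinv * A * ginv * Aᵀ
          - hinv * A * (Ginv * (Aᵀ * hinv * A) * ginv) * Aᵀ := by
        simp only [Matrix.add_mul, Matrix.mul_sub, Matrix.mul_assoc]; abel
    _ = 1 := by
        rw [hh, key]
        simp only [Matrix.mul_one, Matrix.mul_sub, Matrix.sub_mul]; abel

theorem eq_mulVec_of_block_fst [DecidableEq m] [DecidableEq n] {g G Ginv : Matrix n n R}
    {A : Matrix m n R} {h hinv : Matrix m m R} (hh : hinv * h = 1)
    (hG : G = g - Aᵀ * hinv * A) (hGinv : Ginv * G = 1) {x p : n → R} {y q : m → R}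
    (h₁ : g *ᵥ x + Aᵀ *ᵥ y = p) (h₂ : A *ᵥ x + h *ᵥ y = q) :
    x = Ginv *ᵥ (p - Aᵀ *ᵥ (hinv *ᵥ q)) :=
  eq_mulVec_of_mul_eq_one hGinv (hG ▸ schur_mulVec_eq hh h₁ h₂)

theorem eq_mulVec_of_block_snd [DecidableEq m] [DecidableEq n] {g ginv G Ginv : Matrix n n R}
    {A : Matrix m n R} {h hinv : Matrix m m R} (hh : hinv * h = 1) (hg : ginv * g = 1)
    (hG : G = g - Aᵀ * hinv * A) (hGinv : Ginv * G = 1) {x p : n → R} {y q : m → R}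
    (h₁ : g *ᵥ x + Aᵀ *ᵥ y = p) (h₂ : A *ᵥ x + h *ᵥ y = q) :
    y = (hinv + hinv * A * Ginv * Aᵀ * hinv) *ᵥ (q - A *ᵥ (ginv *ᵥ p)) := by
  have h₁' : h *ᵥ y + Aᵀᵀ *ᵥ x = q := by rw [transpose_transpose, add_comm, h₂]
  have h₂' : Aᵀ *ᵥ y + g *ᵥ x = p := by rw [add_comm, h₁]
  have := schur_mulVec_eq hg h₁' h₂'
  rw [transpose_transpose] at this
  exact eq_mulVec_of_mul_eq_one (woodbury_mul_eq_one hh (mul_eq_one_comm.mp hg) hG hGinv) this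

end Matrix

section

variable {ι R : Type*} [CommRing R]

theorem two_mul_eq_of_symm_of_add_swap {T W : ι → ι → ι → R}
    (hsymm : ∀ a b c, T a b c = T b a c) (hW : ∀ a b c, T a b c + T a c b = W a b c)
    (a b c : ι) : 2 * T a b c = W a b c + W b a c - W c a b := by
  linear_combination hW a b c + hW b a c - hW c a b + hsymm a b c + hsymm c a b + hsymm c b a

theorem two_mul_eq_of_antisymm_of_sub_swap {X K : ι → ι → ι → R}
    (hanti : ∀ a b c, X a b c + X c b a = 0) (hK : ∀ a b c, X a b c - X a c b = K a b c)
    (a b c : ι) : 2 * X a b c = K a b c - K b c a + K c a b := by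
  linear_combination hK a b c - hK b c a + hK c a b + hanti a b c + hanti a c b - hanti b a c

end

theorem eps_cyclic (i j k : Fin 3) : eps i j k = eps j k i := by
  fin_cases i <;> fin_cases j <;> fin_cases k <;> norm_num [eps]

theorem eps_swap (i j k : Fin 3) : eps i j k = -eps k j i := by
  fin_cases i <;> fin_cases j <;> fin_cases k <;> norm_num [eps]

theorem gt_eq {ι : Type*} {g gt : Matrix ι ι ℝ} {hinv : Matrix (Fin 3) (Fin 3) ℝ}
    {A : Matrix (Fin 3) ι ℝ}
    (hgt : ∀ μ ν, gt μ ν = g μ ν - ∑ i, ∑ j, hinv i j * A i μ * A j ν) :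
    gt = g - Aᵀ * hinv * A := by
  ext μ ν
  rw [hgt, Matrix.sub_apply, mul_apply, Finset.sum_comm]
  simp only [mul_apply, Finset.sum_mul, transpose_apply]
  congr 1
  exact Finset.sum_congr rfl fun i _ => Finset.sum_congr rfl fun j _ => by ring

section

variable {ι : Type*} [Fintype ι] {g ginv gt gtinv : Matrix ι ι ℝ}
  {h hinv ht : Matrix (Fin 3) (Fin 3) ℝ} {A : Matrix (Fin 3) ι ℝ}
  {Dg Dgt : ι → ι → ι → ℝ} {Dh : ι → Fin 3 → Fin 3 → ℝ} {DA : ι → Fin 3 → ι → ℝ}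
  {C : ι → ι → Fin 3 → ℝ} {Γ Γt : ι → ι → ι → ℝ} {F : ι → ι → Fin 3 → ℝ}
  {D : ι → Fin 3 → Fin 3 → ℝ} {E : Fin 3 → ι → ι → ℝ} {B : Fin 3 → ι → Fin 3 → ℝ}
  {H : Fin 3 → Fin 3 → Fin 3 → ℝ}

theorem ht_eq (hgtinv : gtinv.IsSymm) (hht : ∀ i j, ht i j = hinv i j
    + ∑ k, ∑ l, ∑ μ, ∑ ν, hinv i k * hinv l j * gtinv μ ν * A k ν * A l μ) :
    ht = hinv + hinv * A * gtinv * Aᵀ * hinv := by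
  ext i j
  rw [hht, Matrix.add_apply]
  simp only [mul_apply, Finset.sum_mul, transpose_apply]
  congr 1
  rw [Finset.sum_comm]
  refine Finset.sum_congr rfl fun l _ => ?_
  rw [Finset.sum_comm]
  refine Finset.sum_congr rfl fun μ _ => ?_
  rw [Finset.sum_comm]
  refine Finset.sum_congr rfl fun ν _ => Finset.sum_congr rfl fun k _ => ?_
  rw [hgtinv.apply]
  ring

theorem sum_h_mul_E_eq (hhS : h.IsSymm) (hgS : g.IsSymm)
    (hΓ : ∀ μ α β, Γ μ α β = Γ μ β α) (hE : ∀ i α β, E i α β = E i β α)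
    (heq2 : ∀ α i β, DA α i β - (∑ μ, A i μ * Γ μ α β) + (∑ μ, g β μ * F μ α i)
        + (∑ k, A k β * B k α i) + (∑ k, h k i * E k α β) = 0)
    (heq3 : ∀ α β i, (∑ μ, g μ β * F μ α i) + (∑ μ, g α μ * F μ β i)
        + (∑ k, A k β * B k α i) + (∑ k, A k α * B k β i) = 0) (i : Fin 3) (α β : ι) :
    ∑ k, h i k * E k α β = -(1/2) * (DA α i β + DA β i α - 2 * ∑ μ, A i μ * Γ μ α β) := by
  have h₁ := heq2 α i β
  have h₂ := heq2 β i α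
  have h₃ := heq3 α β i
  simp only [hΓ _ β α, hE _ β α, hhS.apply i] at h₁ h₂
  simp only [hgS.apply β] at h₃
  linarith

theorem sum_g_mul_F_add_sum_A_mul_B (hgS : g.IsSymm)
    (hΓ : ∀ μ α β, Γ μ α β = Γ μ β α) (hE : ∀ i α β, E i α β = E i β α)
    (heq2 : ∀ α i β, DA α i β - (∑ μ, A i μ * Γ μ α β) + (∑ μ, g β μ * F μ α i)
        + (∑ k, A k β * B k α i) + (∑ k, h k i * E k α β) = 0)
    (heq3 : ∀ α β i, (∑ μ, g μ β * F μ α i) + (∑ μ, g α μ * F μ β i)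
        + (∑ k, A k β * B k α i) + (∑ k, A k α * B k β i) = 0) (α β : ι) (i : Fin 3) :
    ∑ μ, g β μ * F μ α i + ∑ k, A k β * B k α i = -(1/2) * (DA α i β - DA β i α) := by
  have h₁ := heq2 α i β
  have h₂ := heq2 β i α
  have h₃ := heq3 α β i
  simp only [hΓ _ β α, hE _ β α] at h₂
  simp only [hgS.apply β] at h₃
  linarith

theorem sum_A_mul_F_add_sum_h_mul_B (hhS : h.IsSymm) (hD : ∀ μ i j, D μ i j = D μ j i)
    (hH : ∀ i j k, H i j k - H i k j + eps i j k = 0)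
    (heq4 : ∀ α i j, Dh α i j + (∑ μ, A i μ * F μ α j) + (∑ μ, A j μ * F μ α i)
        + (∑ k, h k j * B k α i) + (∑ k, h i k * B k α j) = 0)
    (heq5 : ∀ α i j, (∑ μ, g μ α * D μ i j) + (∑ μ, A j μ * F μ α i)
        + (∑ k, A k α * H k i j) + (∑ k, h j k * B k α i) = 0) (α : ι) (i j : Fin 3) :
    ∑ μ, A j μ * F μ α i + ∑ k, h j k * B k α i
      = -(1/2) * (Dh α i j - ∑ l, A l α * eps i j l) := by
  have h₄ := heq4 α i j
  have h₅ := heq5 α i j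
  have h₅' := heq5 α j i
  have hAH : ∑ k, A k α * H k j i = ∑ k, A k α * H k i j + ∑ l, A l α * eps i j l := by
    rw [← Finset.sum_add_distrib]
    refine Finset.sum_congr rfl fun k _ => ?_
    rw [← eps_cyclic k i j]
    linear_combination (-A k α) * hH k i j
  simp only [hD _ j i, hAH] at h₅'
  simp only [hhS.apply j] at h₄
  linarith

theorem sum_g_mul_D_add_sum_A_mul_H (hgS : g.IsSymm)
    (heq5 : ∀ α i j, (∑ μ, g μ α * D μ i j) + (∑ μ, A j μ * F μ α i)
        + (∑ k, A k α * H k i j) + (∑ k, h j k * B k α i) = 0)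
    (hQ : ∀ α i j, ∑ μ, A j μ * F μ α i + ∑ k, h j k * B k α i
      = -(1/2) * (Dh α i j - ∑ l, A l α * eps i j l)) (β : ι) (i j : Fin 3) :
    ∑ μ, g β μ * D μ i j + ∑ k, A k β * (H k i j + 1/2 * eps k i j) = 1/2 * Dh β i j := by
  have h₅ := heq5 β i j
  have hAH : ∑ k, A k β * (H k i j + 1/2 * eps k i j)
      = ∑ k, A k β * H k i j + 1/2 * ∑ l, A l β * eps i j l := by
    rw [Finset.mul_sum, ← Finset.sum_add_distrib]
    refine Finset.sum_congr rfl fun k _ => ?_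
    rw [eps_cyclic k]
    ring
  simp only [hgS.apply β] at h₅
  linarith [hQ β i j]

theorem sum_A_mul_D_add_sum_h_mul_H (hhS : h.IsSymm) (hD : ∀ μ i j, D μ i j = D μ j i)
    (hH : ∀ i j k, H i j k - H i k j + eps i j k = 0)
    (heq6 : ∀ i j k, (∑ μ, A j μ * D μ i k) + (∑ μ, A k μ * D μ i j)
        + (∑ l, h l k * H l i j) + (∑ l, h l j * H l i k) = 0) (m i k : Fin 3) :
    ∑ μ, A m μ * D μ i k + ∑ l, h m l * (H l i k + 1/2 * eps l i k)
      = 1/2 * (∑ l, h l i * eps k m l + ∑ l, h l k * eps i m l) := by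
  set X : Fin 3 → Fin 3 → Fin 3 → ℝ := fun a b c => ∑ μ, A a μ * D μ b c + ∑ l, h a l * H l b c
  have hanti : ∀ a b c, X a b c + X c b a = 0 := by
    intro a b c
    have h₆ := heq6 b a c
    simp only [hhS.apply a, hhS.apply c] at h₆
    simp only [X]
    linarith
  have hK : ∀ a b c, X a b c - X a c b = -∑ l, h a l * eps l b c := by
    intro a b c
    simp only [X, hD _ c b, ← Finset.sum_neg_distrib]
    rw [add_sub_add_left_eq_sub, ← Finset.sum_sub_distrib]
    refine Finset.sum_congr rfl fun l _ => ?_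
    linear_combination h a l * hH l b c
  have hX := two_mul_eq_of_antisymm_of_sub_swap hanti hK m i k
  have hi : ∑ l, h i l * eps l k m = ∑ l, h l i * eps k m l := by
    simp only [hhS.apply i, eps_cyclic _ k m]
  have hk : ∑ l, h k l * eps l m i = -∑ l, h l k * eps i m l := by
    simp only [hhS.apply k, eps_swap _ m i, mul_neg, Finset.sum_neg_distrib]
  have hhH : ∑ l, h m l * (H l i k + 1/2 * eps l i k)
      = ∑ l, h m l * H l i k + 1/2 * ∑ l, h m l * eps l i k := by
    rw [Finset.mul_sum, ← Finset.sum_add_distrib]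
    exact Finset.sum_congr rfl fun l _ => by ring
  linarith

theorem sum_gt_mul_Γ_add_sum_gt_mul_Γ (hh : hinv * h = 1) (hgS : g.IsSymm)
    (hgt : gt = g - Aᵀ * hinv * A)
    (hhE : ∀ i α β, ∑ k, h i k * E k α β
      = -(1/2) * (DA α i β + DA β i α - 2 * ∑ μ, A i μ * Γ μ α β))
    (heq1 : ∀ α β γ, Dg α β γ - (∑ μ, g μ γ * Γ μ α β) - (∑ μ, g β μ * Γ μ α γ)
        + (∑ i, A i γ * E i α β) + (∑ i, A i β * E i α γ) = 0) (x y z : ι) :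
    ∑ m, gt z m * Γ m x y + ∑ m, gt y m * Γ m x z
      = Dg x y z - ∑ i, A i z * ∑ j, hinv i j * ((DA x j y + DA y j x) / 2)
        - ∑ i, A i y * ∑ j, hinv i j * ((DA x j z + DA z j x) / 2) := by
  have key : ∀ y z, ∑ m, gt z m * Γ m x y = ∑ μ, g μ z * Γ μ x y - ∑ i, A i z * E i x y
      - ∑ i, A i z * ∑ j, hinv i j * ((DA x j y + DA y j x) / 2) := by
    intro y z
    have h₁ : g *ᵥ (fun m => Γ m x y) + Aᵀ *ᵥ (-fun k => E k x y)
        = g *ᵥ (fun m => Γ m x y) - Aᵀ *ᵥ (fun k => E k x y) := by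
      rw [mulVec_neg, ← sub_eq_add_neg]
    have h₂ : A *ᵥ (fun m => Γ m x y) + h *ᵥ (-fun k => E k x y)
        = fun j => (DA x j y + DA y j x) / 2 := by
      ext i
      have := hhE i x y
      simp only [mulVec, dotProduct, Pi.add_apply, Pi.neg_apply, mul_neg, Finset.sum_neg_distrib]
      linarith
    have := congrFun (schur_mulVec_eq hh h₁ h₂) z
    rw [← hgt] at this
    simpa only [mulVec, dotProduct, transpose_apply, Pi.sub_apply, hgS.apply z] using this
  have hgy : ∑ μ, g y μ * Γ μ x z = ∑ μ, g μ y * Γ μ x z := by simp only [hgS.apply y]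
  linarith [heq1 x y z, key y z, key z y]

theorem E_eq (hh : hinv * h = 1)
    (hhE : ∀ i α β, ∑ k, h i k * E k α β
      = -(1/2) * (DA α i β + DA β i α - 2 * ∑ μ, A i μ * Γ μ α β)) (k : Fin 3) (α β : ι) :
    E k α β = -(1/2) * ∑ i, hinv k i *
      (DA α i β + DA β i α - 2 * ∑ μ, A i μ * Γ μ α β) := by
  rw [congrFun (eq_mulVec_of_mul_eq_one (x := fun k => E k α β) hh (funext fun i => hhE i α β)) k]
  simp only [mulVec, dotProduct, Finset.mul_sum]
  exact Finset.sum_congr rfl fun i _ => by ring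

variable [DecidableEq ι]

theorem F_eq (hh : hinv * h = 1) (hhinvS : hinv.IsSymm) (hgt : gt = g - Aᵀ * hinv * A)
    (hgtinv : gtinv * gt = 1) (hgtinvS : gtinv.IsSymm) {α : ι} {i : Fin 3}
    (hP : ∀ β, ∑ μ, g β μ * F μ α i + ∑ k, A k β * B k α i = -(1/2) * (DA α i β - DA β i α))
    (hQ : ∀ j, ∑ μ, A j μ * F μ α i + ∑ k, h j k * B k α i
      = -(1/2) * (Dh α i j - ∑ l, A l α * eps i j l)) (ν : ι) :
    F ν α i = (1/2) * ∑ β, gtinv β ν *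
      (-(DA α i β - DA β i α)
        + ∑ j, ∑ k, hinv j k * A k β * (Dh α i j - ∑ l, A l α * eps i j l)) := by
  have := congrFun (eq_mulVec_of_block_fst (x := fun μ => F μ α i) (y := fun k => B k α i)
    hh hgt hgtinv (funext hP) (funext hQ)) ν
  rw [this]
  simp only [mulVec, dotProduct, Pi.sub_apply, transpose_apply, Finset.mul_sum, hgtinvS.apply ν]
  refine Finset.sum_congr rfl fun β _ => ?_
  rw [Finset.sum_comm]
  have hterm : ∀ j k, A k β * (hinv j k * (-(1/2) * (Dh α i j - ∑ l, A l α * eps i j l)))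
      = -(1/2) * (hinv j k * A k β * (Dh α i j - ∑ l, A l α * eps i j l)) := fun _ _ => by ring
  simp only [hhinvS.apply, hterm, ← Finset.mul_sum]
  ring

theorem B_eq (hh : hinv * h = 1) (hg : ginv * g = 1) (hgt : gt = g - Aᵀ * hinv * A)
    (hgtinv : gtinv * gt = 1) (hht : ht = hinv + hinv * A * gtinv * Aᵀ * hinv)
    (hhtS : ht.IsSymm) {α : ι} {i : Fin 3}
    (hP : ∀ β, ∑ μ, g β μ * F μ α i + ∑ k, A k β * B k α i = -(1/2) * (DA α i β - DA β i α))
    (hQ : ∀ j, ∑ μ, A j μ * F μ α i + ∑ k, h j k * B k α i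
      = -(1/2) * (Dh α i j - ∑ l, A l α * eps i j l)) (k : Fin 3) :
    B k α i = (1/2) * ∑ j, ht j k *
      ((∑ μ, ∑ β, ginv μ β * A j μ * (DA α i β - DA β i α))
        + (∑ l, A l α * eps i j l) - Dh α i j) := by
  have := congrFun (eq_mulVec_of_block_snd (x := fun μ => F μ α i) (y := fun k => B k α i) hh hg hgt
    hgtinv (funext hP) (funext hQ)) k
  rw [this, ← hht]
  simp only [mulVec, dotProduct, Pi.sub_apply, Finset.mul_sum, hhtS.apply k]
  refine Finset.sum_congr rfl fun j _ => ?_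
  have hterm : ∀ μ β, A j μ * (ginv μ β * (-(1/2) * (DA α i β - DA β i α)))
      = -(1/2) * (ginv μ β * A j μ * (DA α i β - DA β i α)) := fun _ _ => by ring
  simp only [hterm, ← Finset.mul_sum]
  ring

theorem D_eq (hh : hinv * h = 1) (hhinvS : hinv.IsSymm) (hgt : gt = g - Aᵀ * hinv * A)
    (hgtinv : gtinv * gt = 1) {i j : Fin 3}
    (hV : ∀ β, ∑ μ, g β μ * D μ i j + ∑ k, A k β * (H k i j + 1/2 * eps k i j)
      = 1/2 * Dh β i j)
    (hR : ∀ m, ∑ μ, A m μ * D μ i j + ∑ l, h m l * (H l i j + 1/2 * eps l i j)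
      = 1/2 * (∑ l, h l i * eps j m l + ∑ l, h l j * eps i m l)) (ν : ι) :
    D ν i j = (1/2) * ∑ α, gtinv ν α *
      (Dh α i j - ∑ k, ∑ m, A k α * hinv m k *
        ((∑ n, h n i * eps j m n) + ∑ n, h n j * eps i m n)) := by
  have := congrFun (eq_mulVec_of_block_fst (x := fun μ => D μ i j)
    (y := fun k => H k i j + 1/2 * eps k i j) hh hgt hgtinv (funext hV) (funext hR)) ν
  rw [this]
  simp only [mulVec, dotProduct, Pi.sub_apply, transpose_apply, Finset.mul_sum]
  refine Finset.sum_congr rfl fun α _ => ?_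
  have hterm : ∀ k m, A k α * (hinv k m * (1/2 * (∑ l, h l i * eps j m l + ∑ l, h l j * eps i m l)))
      = 1/2 * (A k α * hinv m k * (∑ l, h l i * eps j m l + ∑ l, h l j * eps i m l)) :=
    fun k m => by rw [hhinvS.apply]; ring
  simp only [hterm, ← Finset.mul_sum]
  ring

theorem H_eq (hh : hinv * h = 1) (hg : ginv * g = 1) (hgt : gt = g - Aᵀ * hinv * A)
    (hgtinv : gtinv * gt = 1) (hht : ht = hinv + hinv * A * gtinv * Aᵀ * hinv)
    (hhtS : ht.IsSymm) {i k : Fin 3}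
    (hV : ∀ β, ∑ μ, g β μ * D μ i k + ∑ l, A l β * (H l i k + 1/2 * eps l i k)
      = 1/2 * Dh β i k)
    (hR : ∀ m, ∑ μ, A m μ * D μ i k + ∑ l, h m l * (H l i k + 1/2 * eps l i k)
      = 1/2 * (∑ l, h l i * eps k m l + ∑ l, h l k * eps i m l)) (l : Fin 3) :
    H l i k = (1/2) * (∑ j, ht j l *
      ((∑ n, h n i * eps k j n) + (∑ n, h n k * eps i j n)
        - ∑ μ, ∑ α, A j μ * ginv μ α * Dh α i k)) - (1/2) * eps l i k := by
  have := congrFun (eq_mulVec_of_block_snd (x := fun μ => D μ i k)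
    (y := fun l => H l i k + 1/2 * eps l i k) hh hg hgt hgtinv (funext hV) (funext hR)) l
  rw [← hht] at this
  rw [eq_sub_iff_add_eq, this]
  simp only [mulVec, dotProduct, Pi.sub_apply, Finset.mul_sum, hhtS.apply l]
  refine Finset.sum_congr rfl fun j _ => ?_
  have hterm : ∀ μ α, A j μ * (ginv μ α * (1/2 * Dh α i k))
      = 1/2 * (A j μ * ginv μ α * Dh α i k) := fun _ _ => by ring
  simp only [hterm, ← Finset.mul_sum]
  ring

theorem Γ_eq (hh : hinv * h = 1) (hgS : g.IsSymm) (hgt : gt = g - Aᵀ * hinv * A)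
    (hgtinv : gtinv * gt = 1) (hhinvS : hinv.IsSymm) (hDh : ∀ α i j, Dh α i j = Dh α j i)
    (hΓ : ∀ μ α β, Γ μ α β = Γ μ β α)
    (hhE : ∀ i α β, ∑ k, h i k * E k α β
      = -(1/2) * (DA α i β + DA β i α - 2 * ∑ μ, A i μ * Γ μ α β))
    (heq1 : ∀ α β γ, Dg α β γ - (∑ μ, g μ γ * Γ μ α β) - (∑ μ, g β μ * Γ μ α γ)
        + (∑ i, A i γ * E i α β) + (∑ i, A i β * E i α γ) = 0)
    (hDgt : ∀ α μ ν, Dgt α μ ν = Dg α μ ν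
        + (∑ i, ∑ j, ∑ k, ∑ l, hinv i k * hinv j l * Dh α k l * A i μ * A j ν)
        - ∑ i, ∑ j, hinv i j * (DA α i μ * A j ν + A i μ * DA α j ν))
    (hΓt : ∀ σ μ ν, Γt σ μ ν = (1/2) * ∑ ρ, gtinv σ ρ * (Dgt μ ν ρ + Dgt ν μ ρ - Dgt ρ μ ν))
    (hC : ∀ α β i, C α β i = (∑ j, hinv i j * DA α j β)
        - ∑ j, ∑ k, ∑ l, A j β * hinv i k * hinv j l * Dh α k l) (σ μ ν : ι) :
    Γ σ μ ν = Γt σ μ ν + (1/2) * ∑ ρ, gtinv σ ρ *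
      ((∑ i, A i μ * (C ν ρ i - C ρ ν i)) + (∑ i, A i ν * (C μ ρ i - C ρ μ i))
        - ∑ i, ∑ j, ∑ k, ∑ l, A i μ * A j ν * hinv i k * hinv j l * Dh ρ k l) := by
  have hlower : ∀ ρ, ∑ m, gt ρ m * Γ m μ ν = 1/2 * (Dgt μ ν ρ + Dgt ν μ ρ - Dgt ρ μ ν)
      + 1/2 * ((∑ i, A i μ * (C ν ρ i - C ρ ν i)) + (∑ i, A i ν * (C μ ρ i - C ρ μ i))
        - ∑ i, ∑ j, ∑ k, ∑ l, A i μ * A j ν * hinv i k * hinv j l * Dh ρ k l) := by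
    intro ρ
    have h₂ := two_mul_eq_of_symm_of_add_swap (T := fun x y z => ∑ m, gt z m * Γ m x y)
      (fun x y z => by simp only [hΓ _ x y])
      (sum_gt_mul_Γ_add_sum_gt_mul_Γ hh hgS hgt hhE heq1) μ ν ρ
    simp only [hDgt, hC, Fin.sum_univ_three, hhinvS.apply 1 0, hhinvS.apply 2 0, hhinvS.apply 2 1,
      hDh _ 1 0, hDh _ 2 0, hDh _ 2 1] at h₂ ⊢
    linear_combination (1/2) * h₂
  rw [congrFun (eq_mulVec_of_mul_eq_one (x := fun m => Γ m μ ν) hgtinv (funext hlower)) σ, hΓt]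
  simp only [mulVec, dotProduct, mul_add, Finset.sum_add_distrib, Finset.mul_sum]
  congr 1 <;> exact Finset.sum_congr rfl fun ρ _ => by ring

end

theorem stmt0_general (n : ℕ)
    (g ginv : Fin n → Fin n → ℝ)
    (h hinv : Fin 3 → Fin 3 → ℝ)
    (A : Fin 3 → Fin n → ℝ)
    (Dg : Fin n → Fin n → Fin n → ℝ)
    (Dh : Fin n → Fin 3 → Fin 3 → ℝ)
    (DA : Fin n → Fin 3 → Fin n → ℝ)
    (hg_symm : ∀ μ ν, g μ ν = g ν μ)
    (hh_symm : ∀ i j, h i j = h j i)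
    (hg_inv' : ∀ μ ν, ∑ ρ, ginv μ ρ * g ρ ν = if μ = ν then 1 else 0)
    (hh_inv' : ∀ i j, ∑ k, hinv i k * h k j = if i = j then 1 else 0)
    (hDh_symm : ∀ α i j, Dh α i j = Dh α j i)
    -- the effective metric g̃ and its inverse
    (gt gtinv : Fin n → Fin n → ℝ)
    (hgt : ∀ μ ν, gt μ ν = g μ ν - ∑ i, ∑ j, hinv i j * A i μ * A j ν)
    (hgt_inv' : ∀ μ ν, ∑ ρ, gtinv μ ρ * gt ρ ν = if μ = ν then 1 else 0)
    -- h̃^{ij}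
    (ht : Fin 3 → Fin 3 → ℝ)
    (hht : ∀ i j, ht i j = hinv i j
        + ∑ k, ∑ l, ∑ μ, ∑ ν, hinv i k * hinv l j * gtinv μ ν * A k ν * A l μ)
    -- Dg̃ and Γ̃
    (Dgt : Fin n → Fin n → Fin n → ℝ)
    (hDgt : ∀ α μ ν, Dgt α μ ν = Dg α μ ν
        + (∑ i, ∑ j, ∑ k, ∑ l, hinv i k * hinv j l * Dh α k l * A i μ * A j ν)
        - ∑ i, ∑ j, hinv i j * (DA α i μ * A j ν + A i μ * DA α j ν))
    (Γt : Fin n → Fin n → Fin n → ℝ)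
    (hΓt : ∀ σ μ ν, Γt σ μ ν = (1/2) * ∑ ρ, gtinv σ ρ * (Dgt μ ν ρ + Dgt ν μ ρ - Dgt ρ μ ν))
    -- C_{α,β}{}^i
    (C : Fin n → Fin n → Fin 3 → ℝ)
    (hC : ∀ α β i, C α β i = (∑ j, hinv i j * DA α j β)
        - ∑ j, ∑ k, ∑ l, A j β * hinv i k * hinv j l * Dh α k l)
    -- the unknown connection coefficients
    (Γ : Fin n → Fin n → Fin n → ℝ)
    (F : Fin n → Fin n → Fin 3 → ℝ)
    (D : Fin n → Fin 3 → Fin 3 → ℝ)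
    (E : Fin 3 → Fin n → Fin n → ℝ)
    (B : Fin 3 → Fin n → Fin 3 → ℝ)
    (H : Fin 3 → Fin 3 → Fin 3 → ℝ)
    -- torsion-free symmetry conditions
    (hΓ_symm : ∀ μ α β, Γ μ α β = Γ μ β α)
    (hD_symm : ∀ μ i j, D μ i j = D μ j i)
    (hE_symm : ∀ i α β, E i α β = E i β α)
    (hH_tor : ∀ i j k, H i j k - H i k j + eps i j k = 0)
    -- the six metric-compatibility equations
    (heq1 : ∀ α β γ, Dg α β γ - (∑ μ, g μ γ * Γ μ α β) - (∑ μ, g β μ * Γ μ α γ)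
        + (∑ i, A i γ * E i α β) + (∑ i, A i β * E i α γ) = 0)
    (heq2 : ∀ α i β, DA α i β - (∑ μ, A i μ * Γ μ α β) + (∑ μ, g β μ * F μ α i)
        + (∑ k, A k β * B k α i) + (∑ k, h k i * E k α β) = 0)
    (heq3 : ∀ α β i, (∑ μ, g μ β * F μ α i) + (∑ μ, g α μ * F μ β i)
        + (∑ k, A k β * B k α i) + (∑ k, A k α * B k β i) = 0)
    (heq4 : ∀ α i j, Dh α i j + (∑ μ, A i μ * F μ α j) + (∑ μ, A j μ * F μ α i)
        + (∑ k, h k j * B k α i) + (∑ k, h i k * B k α j) = 0)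
    (heq5 : ∀ α i j, (∑ μ, g μ α * D μ i j) + (∑ μ, A j μ * F μ α i)
        + (∑ k, A k α * H k i j) + (∑ k, h j k * B k α i) = 0)
    (heq6 : ∀ i j k, (∑ μ, A j μ * D μ i k) + (∑ μ, A k μ * D μ i j)
        + (∑ l, h l k * H l i j) + (∑ l, h l j * H l i k) = 0) :
    -- the unique explicit solution
    (∀ k α β, E k α β = -(1/2) * ∑ i, hinv k i *
        (DA α i β + DA β i α - 2 * ∑ μ, A i μ * Γ μ α β)) ∧
    (∀ μ' α i, F μ' α i = (1/2) * ∑ β, gtinv β μ' *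
        (-(DA α i β - DA β i α)
          + ∑ j, ∑ k, hinv j k * A k β * (Dh α i j - ∑ l, A l α * eps i j l))) ∧
    (∀ k α i, B k α i = (1/2) * ∑ j, ht j k *
        ((∑ μ, ∑ β, ginv μ β * A j μ * (DA α i β - DA β i α))
          + (∑ l, A l α * eps i j l) - Dh α i j)) ∧
    (∀ μ' i j, D μ' i j = (1/2) * ∑ α, gtinv μ' α *
        (Dh α i j - ∑ k, ∑ m, A k α * hinv m k *
            ((∑ n', h n' i * eps j m n') + ∑ n', h n' j * eps i m n'))) ∧
    (∀ l' i k, H l' i k = (1/2) * (∑ j, ht j l' *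
        ((∑ n', h n' i * eps k j n') + (∑ n', h n' k * eps i j n')
          - ∑ μ, ∑ α, A j μ * ginv μ α * Dh α i k)) - (1/2) * eps l' i k) ∧
    (∀ σ μ ν, Γ σ μ ν = Γt σ μ ν + (1/2) * ∑ ρ, gtinv σ ρ *
        ((∑ i, A i μ * (C ν ρ i - C ρ ν i)) + (∑ i, A i ν * (C μ ρ i - C ρ μ i))
          - ∑ i, ∑ j, ∑ k, ∑ l, A i μ * A j ν * hinv i k * hinv j l * Dh ρ k l)) := by
  have hg := mul_eq_one_of_sum_mul_eq_ite hg_inv'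
  have hh := mul_eq_one_of_sum_mul_eq_ite hh_inv'
  have hgtinv := mul_eq_one_of_sum_mul_eq_ite hgt_inv'
  have hgS : IsSymm (g : Matrix (Fin n) (Fin n) ℝ) := .ext fun μ ν => hg_symm ν μ
  have hhS : IsSymm (h : Matrix (Fin 3) (Fin 3) ℝ) := .ext fun i j => hh_symm j i
  have hhinvS := hhS.of_mul_eq_one hh
  have hgtM := gt_eq hgt
  have hgtinvS := (hgtM ▸ hgS.sub (isSymm_transpose_mul_mul hhinvS A)).of_mul_eq_one hgtinv
  have hhtM := ht_eq hgtinvS hht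
  have hhtS := hhtM ▸ isSymm_add_mul_mul_mul_transpose_mul hhinvS hgtinvS A
  have hhE := sum_h_mul_E_eq hhS hgS hΓ_symm hE_symm heq2 heq3
  have hP := sum_g_mul_F_add_sum_A_mul_B hgS hΓ_symm hE_symm heq2 heq3
  have hQ := sum_A_mul_F_add_sum_h_mul_B hhS hD_symm hH_tor heq4 heq5
  have hV := sum_g_mul_D_add_sum_A_mul_H hgS heq5 hQ
  have hR := sum_A_mul_D_add_sum_h_mul_H hhS hD_symm hH_tor heq6
  exact ⟨E_eq hh hhE,
    fun ν α i => F_eq hh hhinvS hgtM hgtinv hgtinvS (hP α · i) (hQ α i) ν,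
    fun k α i => B_eq hh hg hgtM hgtinv hhtM hhtS (hP α · i) (hQ α i) k,
    fun ν i j => D_eq hh hhinvS hgtM hgtinv (hV · i j) (hR · i j) ν,
    fun l i k => H_eq hh hg hgtM hgtinv hhtM hhtS (hV · i k) (hR · i k) l,
    Γ_eq hh hgS hgtM hgtinv hhinvS hDh_symm hΓ_symm hhE heq1 hDgt hΓt hC⟩

/-- Any arrays `(Γ, F, D, E, B, H)` satisfying the torsion-free symmetry conditions and the
six metric-compatibility equations for the data `(g, h, A, Dg, Dh, DA)` are uniquely
determined, being given by the stated explicit formulas. -/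
theorem stmt0 (n : ℕ) (hn : 1 ≤ n)
    (g ginv : Fin n → Fin n → ℝ)
    (h hinv : Fin 3 → Fin 3 → ℝ)
    (A : Fin 3 → Fin n → ℝ)
    (Dg : Fin n → Fin n → Fin n → ℝ)
    (Dh : Fin n → Fin 3 → Fin 3 → ℝ)
    (DA : Fin n → Fin 3 → Fin n → ℝ)
    (hg_symm : ∀ μ ν, g μ ν = g ν μ)
    (hh_symm : ∀ i j, h i j = h j i)
    (hg_inv : ∀ μ ν, ∑ ρ, g μ ρ * ginv ρ ν = if μ = ν then 1 else 0)
    (hg_inv' : ∀ μ ν, ∑ ρ, ginv μ ρ * g ρ ν = if μ = ν then 1 else 0)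
    (hh_inv : ∀ i j, ∑ k, h i k * hinv k j = if i = j then 1 else 0)
    (hh_inv' : ∀ i j, ∑ k, hinv i k * h k j = if i = j then 1 else 0)
    (hDg_symm : ∀ α β γ, Dg α β γ = Dg α γ β)
    (hDh_symm : ∀ α i j, Dh α i j = Dh α j i)
    -- the effective metric g̃ and its inverse
    (gt gtinv : Fin n → Fin n → ℝ)
    (hgt : ∀ μ ν, gt μ ν = g μ ν - ∑ i, ∑ j, hinv i j * A i μ * A j ν)
    (hgt_inv : ∀ μ ν, ∑ ρ, gt μ ρ * gtinv ρ ν = if μ = ν then 1 else 0)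
    (hgt_inv' : ∀ μ ν, ∑ ρ, gtinv μ ρ * gt ρ ν = if μ = ν then 1 else 0)
    -- h̃^{ij}
    (ht : Fin 3 → Fin 3 → ℝ)
    (hht : ∀ i j, ht i j = hinv i j
        + ∑ k, ∑ l, ∑ μ, ∑ ν, hinv i k * hinv l j * gtinv μ ν * A k ν * A l μ)
    -- Dg̃ and Γ̃
    (Dgt : Fin n → Fin n → Fin n → ℝ)
    (hDgt : ∀ α μ ν, Dgt α μ ν = Dg α μ ν
        + (∑ i, ∑ j, ∑ k, ∑ l, hinv i k * hinv j l * Dh α k l * A i μ * A j ν)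
        - ∑ i, ∑ j, hinv i j * (DA α i μ * A j ν + A i μ * DA α j ν))
    (Γt : Fin n → Fin n → Fin n → ℝ)
    (hΓt : ∀ σ μ ν, Γt σ μ ν = (1/2) * ∑ ρ, gtinv σ ρ * (Dgt μ ν ρ + Dgt ν μ ρ - Dgt ρ μ ν))
    -- C_{α,β}{}^i
    (C : Fin n → Fin n → Fin 3 → ℝ)
    (hC : ∀ α β i, C α β i = (∑ j, hinv i j * DA α j β)
        - ∑ j, ∑ k, ∑ l, A j β * hinv i k * hinv j l * Dh α k l)
    -- the unknown connection coefficients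
    (Γ : Fin n → Fin n → Fin n → ℝ)
    (F : Fin n → Fin n → Fin 3 → ℝ)
    (D : Fin n → Fin 3 → Fin 3 → ℝ)
    (E : Fin 3 → Fin n → Fin n → ℝ)
    (B : Fin 3 → Fin n → Fin 3 → ℝ)
    (H : Fin 3 → Fin 3 → Fin 3 → ℝ)
    -- torsion-free symmetry conditions
    (hΓ_symm : ∀ μ α β, Γ μ α β = Γ μ β α)
    (hD_symm : ∀ μ i j, D μ i j = D μ j i)
    (hE_symm : ∀ i α β, E i α β = E i β α)
    (hH_tor : ∀ i j k, H i j k - H i k j + eps i j k = 0)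
    -- the six metric-compatibility equations
    (heq1 : ∀ α β γ, Dg α β γ - (∑ μ, g μ γ * Γ μ α β) - (∑ μ, g β μ * Γ μ α γ)
        + (∑ i, A i γ * E i α β) + (∑ i, A i β * E i α γ) = 0)
    (heq2 : ∀ α i β, DA α i β - (∑ μ, A i μ * Γ μ α β) + (∑ μ, g β μ * F μ α i)
        + (∑ k, A k β * B k α i) + (∑ k, h k i * E k α β) = 0)
    (heq3 : ∀ α β i, (∑ μ, g μ β * F μ α i) + (∑ μ, g α μ * F μ β i)
        + (∑ k, A k β * B k α i) + (∑ k, A k α * B k β i) = 0)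
    (heq4 : ∀ α i j, Dh α i j + (∑ μ, A i μ * F μ α j) + (∑ μ, A j μ * F μ α i)
        + (∑ k, h k j * B k α i) + (∑ k, h i k * B k α j) = 0)
    (heq5 : ∀ α i j, (∑ μ, g μ α * D μ i j) + (∑ μ, A j μ * F μ α i)
        + (∑ k, A k α * H k i j) + (∑ k, h j k * B k α i) = 0)
    (heq6 : ∀ i j k, (∑ μ, A j μ * D μ i k) + (∑ μ, A k μ * D μ i j)
        + (∑ l, h l k * H l i j) + (∑ l, h l j * H l i k) = 0) :
    -- the unique explicit solution
    (∀ k α β, E k α β = -(1/2) * ∑ i, hinv k i *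
        (DA α i β + DA β i α - 2 * ∑ μ, A i μ * Γ μ α β)) ∧
    (∀ μ' α i, F μ' α i = (1/2) * ∑ β, gtinv β μ' *
        (-(DA α i β - DA β i α)
          + ∑ j, ∑ k, hinv j k * A k β * (Dh α i j - ∑ l, A l α * eps i j l))) ∧
    (∀ k α i, B k α i = (1/2) * ∑ j, ht j k *
        ((∑ μ, ∑ β, ginv μ β * A j μ * (DA α i β - DA β i α))
          + (∑ l, A l α * eps i j l) - Dh α i j)) ∧
    (∀ μ' i j, D μ' i j = (1/2) * ∑ α, gtinv μ' α *
        (Dh α i j - ∑ k, ∑ m, A k α * hinv m k *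
            ((∑ n', h n' i * eps j m n') + ∑ n', h n' j * eps i m n'))) ∧
    (∀ l' i k, H l' i k = (1/2) * (∑ j, ht j l' *
        ((∑ n', h n' i * eps k j n') + (∑ n', h n' k * eps i j n')
          - ∑ μ, ∑ α, A j μ * ginv μ α * Dh α i k)) - (1/2) * eps l' i k) ∧
    (∀ σ μ ν, Γ σ μ ν = Γt σ μ ν + (1/2) * ∑ ρ, gtinv σ ρ *
        ((∑ i, A i μ * (C ν ρ i - C ρ ν i)) + (∑ i, A i ν * (C μ ρ i - C ρ μ i))
          - ∑ i, ∑ j, ∑ k, ∑ l, A i μ * A j ν * hinv i k * hinv j l * Dh ρ k l)) :=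
  stmt0_general n g ginv h hinv A Dg Dh DA hg_symm hh_symm hg_inv' hh_inv' hDh_symm gt gtinv hgt
    hgt_inv' ht hht Dgt hDgt Γt hΓt C hC Γ F D E B H hΓ_symm hD_symm hE_symm hH_tor heq1 heq2 heq3
    heq4 heq5 heq6
end
end

section
/- Suppose in addition that h_{ij} = h δ_{ij} for a constant h > 0 and that Dh_{α,ij} = 0 for all α, i, j. Then the unique solution (Γ, F, D, E, B, H) of the torsion-free symmetry conditions and the six metric-compatibility equations is given by: F^μ_{βi} = (1/2) g̃^{αμ} ( DA_{α,iβ} − DA_{β,iα} − (1/h) A_{jα} A_{kβ} ε_{ijk} ); Γ^σ_{μν} = Γ̃^σ_{μν} − (1/h)( A_{μi} F^σ_{νi} + A_{νi} F^σ_{μi} ); D^μ_{ij} = 0; E^k_{αβ} = −(1/(2h)) ( DA_{α,kβ} + DA_{β,kα} − 2 A_{kμ} Γ^μ_{αβ} ); B^k_{αi} = −(1/h) A_{kμ} F^μ_{αi} − (1/(2h)) A_{jα} ε_{kij}; H^i_{jk} = −(1/2) ε_{ijk}. -/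
/-! With `h = h₀ δ` the internal indices are raised and lowered by `h₀`, and the effective metric
is `g̃ = g - h₀⁻¹ AᵀA`. Equation (6) and the torsion condition determine `H` in terms of `D`
by the Koszul trick (add two index permutations of an equation, subtract the third).
Substituting this into (5), symmetrising in the internal indices and subtracting (4) leaves
`g̃ D = 0`, so `D = 0`, `H = -ε/2`, and (5) then gives `B`. Once `B` is known, (3) says that
`g̃ F` is antisymmetric in its two spacetime indices, so the antisymmetric and the symmetric
part of (2) give `g̃ F` and `E`. Finally (1) with `E` substituted is a Koszul system for `g̃ Γ`;
its solution differs from `Γ̃` exactly by the `A F` terms, because the terms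
`A_α · (A_γ × A_β) + A_β · (A_γ × A_α)` cancel. -/

noncomputable section

theorem eps_swap_last (i j k : Fin 3) : eps i k j = -eps i j k := by
  fin_cases i <;> fin_cases j <;> fin_cases k <;> norm_num [eps]

theorem eps_swap_ends (i j k : Fin 3) : eps k j i = -eps i j k := by
  fin_cases i <;> fin_cases j <;> fin_cases k <;> norm_num [eps]

theorem koszul_formula {κ R : Type*} [CommRing R] {X Y : κ → κ → κ → R}
    (hX : ∀ c a b, X c a b = X c b a) (hY : ∀ a b c, X c a b + X b a c = Y a b c) (a b c : κ) :
    2 * X c a b = Y a b c + Y b a c - Y c a b := by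
  linear_combination hY a b c + hY b a c - hY c a b + hX c a b - hX b a c - hX a b c

section LeftInverse

variable {κ R : Type*} [Fintype κ] [DecidableEq κ] [CommRing R] {M N : κ → κ → R}

theorem matrix_of_mul_eq_one (hMN : ∀ μ ν, ∑ ρ, M μ ρ * N ρ ν = if μ = ν then 1 else 0) :
    Matrix.of M * Matrix.of N = 1 := by
  ext μ ν
  simp [Matrix.mul_apply, Matrix.one_apply, hMN]

theorem eq_sum_mul_of_sum_mul_eq (hMN : ∀ μ ν, ∑ ρ, M μ ρ * N ρ ν = if μ = ν then 1 else 0)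
    {X Z : κ → R} (hX : ∀ γ, ∑ μ, N γ μ * X μ = Z γ) (σ : κ) : X σ = ∑ γ, M σ γ * Z γ := by
  have := congrFun (Matrix.mulVec_mulVec X (Matrix.of M) (Matrix.of N)) σ
  rw [matrix_of_mul_eq_one hMN, Matrix.one_mulVec] at this
  simpa [Matrix.mulVec, dotProduct, hX] using this.symm

theorem symm_of_sum_mul_eq (hN : ∀ μ ν, N μ ν = N ν μ)
    (hMN : ∀ μ ν, ∑ ρ, M μ ρ * N ρ ν = if μ = ν then 1 else 0) (μ ν : κ) : M μ ν = M ν μ := by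
  have hsymm : (Matrix.of N).IsSymm := Matrix.IsSymm.ext fun μ ν => hN ν μ
  have := hsymm.inv.apply ν μ
  rwa [Matrix.inv_eq_left_inv (matrix_of_mul_eq_one hMN)] at this

end LeftInverse

section RoundMetric

variable {κ : Type*} [Fintype κ] [DecidableEq κ] {h hinv : κ → κ → ℝ} {h0 : ℝ}

theorem inv_eq_of_round (hh0 : h0 ≠ 0) (hround : ∀ i j, h i j = if i = j then h0 else 0)
    (hh_inv' : ∀ i j, ∑ k, hinv i k * h k j = if i = j then 1 else 0) (i j : κ) :
    hinv i j = if i = j then 1 / h0 else 0 := by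
  have := hh_inv' i j
  simp only [hround, mul_ite, mul_zero, Finset.sum_ite_eq', Finset.mem_univ, if_true] at this
  split_ifs at this ⊢
  · field_simp
    exact this
  · simpa [hh0] using this

theorem sum_sum_round_mul (hround : ∀ i j, h i j = if i = j then h0 else 0) (f : κ → κ → ℝ) :
    ∑ i, ∑ j, h i j * f i j = h0 * ∑ i, f i i := by
  simp [hround, Finset.mul_sum]

end RoundMetric

section Compatibility

variable {ι : Type*} {h0 : ℝ} {g gt gtinv : ι → ι → ℝ} {h hinv : Fin 3 → Fin 3 → ℝ}
  {A : Fin 3 → ι → ℝ} {Dg Dgt Γt : ι → ι → ι → ℝ} {Dh : ι → Fin 3 → Fin 3 → ℝ}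
  {DA : ι → Fin 3 → ι → ℝ} {Γ : ι → ι → ι → ℝ} {F : ι → ι → Fin 3 → ℝ}
  {D : ι → Fin 3 → Fin 3 → ℝ} {E : Fin 3 → ι → ι → ℝ} {B : Fin 3 → ι → Fin 3 → ℝ}
  {H : Fin 3 → Fin 3 → Fin 3 → ℝ}

theorem sum_sum_eps_comm (A : Fin 3 → ι → ℝ) (α β : ι) (i : Fin 3) :
    ∑ j, ∑ k, A j α * A k β * eps i j k = -∑ j, ∑ k, A j β * A k α * eps i j k := by
  simp only [Fin.sum_univ_three]
  fin_cases i <;> norm_num [eps] <;> ring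

theorem sum_mul_sum_sum_eps_add (A : Fin 3 → ι → ℝ) (α β γ : ι) :
    ∑ i, A i α * ∑ j, ∑ k, A j γ * A k β * eps i j k
      + ∑ i, A i β * ∑ j, ∑ k, A j γ * A k α * eps i j k = 0 := by
  simp only [Fin.sum_univ_three]
  norm_num [eps]
  ring

theorem effMetric_eq_of_round (hinv_eq : ∀ i j, hinv i j = if i = j then 1 / h0 else 0)
    (hgt : ∀ μ ν, gt μ ν = g μ ν - ∑ i, ∑ j, hinv i j * A i μ * A j ν) (μ ν : ι) :
    gt μ ν = g μ ν - 1 / h0 * ∑ i, A i μ * A i ν := by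
  simp_rw [hgt, mul_assoc, sum_sum_round_mul hinv_eq]

theorem effMetric_symm (hg_symm : ∀ μ ν, g μ ν = g ν μ)
    (hgt : ∀ μ ν, gt μ ν = g μ ν - 1 / h0 * ∑ i, A i μ * A i ν) (μ ν : ι) : gt μ ν = gt ν μ := by
  simp only [hgt, hg_symm μ ν, mul_comm (A _ μ)]

theorem effMetric_deriv_eq_of_round (hinv_eq : ∀ i j, hinv i j = if i = j then 1 / h0 else 0)
    (hDh0 : ∀ α i j, Dh α i j = 0)
    (hDgt : ∀ α μ ν, Dgt α μ ν = Dg α μ ν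
        + (∑ i, ∑ j, ∑ k, ∑ l, hinv i k * hinv j l * Dh α k l * A i μ * A j ν)
        - ∑ i, ∑ j, hinv i j * (DA α i μ * A j ν + A i μ * DA α j ν)) (α μ ν : ι) :
    Dgt α μ ν = Dg α μ ν - 1 / h0 * ∑ i, (DA α i μ * A i ν + A i μ * DA α i ν) := by
  simp [hDgt, hDh0, sum_sum_round_mul hinv_eq]

variable [Fintype ι]

theorem sum_effMetric_mul (hgt : ∀ μ ν, gt μ ν = g μ ν - 1 / h0 * ∑ i, A i μ * A i ν)
    (X : ι → ℝ) (α : ι) :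
    ∑ μ, gt α μ * X μ = ∑ μ, g α μ * X μ - 1 / h0 * ∑ k, A k α * ∑ μ, A k μ * X μ := by
  simp only [hgt, Fin.sum_univ_three, sub_mul, add_mul, mul_add, Finset.sum_sub_distrib,
    Finset.sum_add_distrib, Finset.mul_sum]
  ring_nf

theorem H_eq_of_compat6 (hh0 : h0 ≠ 0) (hround : ∀ i j, h i j = if i = j then h0 else 0)
    (hD_symm : ∀ μ i j, D μ i j = D μ j i) (hH_tor : ∀ i j k, H i j k - H i k j + eps i j k = 0)
    (heq6 : ∀ i j k, (∑ μ, A j μ * D μ i k) + (∑ μ, A k μ * D μ i j)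
        + (∑ l, h l k * H l i j) + (∑ l, h l j * H l i k) = 0) (i j k : Fin 3) :
    H k i j = -(1 / h0) * ∑ μ, A k μ * D μ i j - 1 / 2 * eps k i j := by
  simp only [hround, ite_mul, zero_mul, Finset.sum_ite_eq', Finset.mem_univ, if_true] at heq6
  have hAD (a b c : Fin 3) : ∑ μ, A a μ * D μ b c = ∑ μ, A a μ * D μ c b :=
    Finset.sum_congr rfl fun μ _ => by rw [hD_symm]
  -- the torsion condition makes `h₀ H + (h₀/2) ε` symmetric in its lower indices
  have hkoszul := koszul_formula (X := fun k i j => h0 * H k i j + h0 / 2 * eps k i j)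
    (Y := fun i j k => -(∑ μ, A j μ * D μ i k) - ∑ μ, A k μ * D μ i j)
    (fun k i j => by linear_combination h0 * hH_tor k i j - h0 / 2 * eps_swap_last k i j)
    (fun i j k => by linear_combination heq6 i j k + h0 / 2 * eps_swap_ends k i j) i j k
  field_simp
  linear_combination hkoszul - hAD j i k - hAD i j k + hAD k i j

theorem compat5_of_round (hround : ∀ i j, h i j = if i = j then h0 else 0)
    (hg_symm : ∀ μ ν, g μ ν = g ν μ)
    (hgt : ∀ μ ν, gt μ ν = g μ ν - 1 / h0 * ∑ i, A i μ * A i ν)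
    (hH : ∀ i j k, H k i j = -(1 / h0) * ∑ μ, A k μ * D μ i j - 1 / 2 * eps k i j)
    (heq5 : ∀ α i j, (∑ μ, g μ α * D μ i j) + (∑ μ, A j μ * F μ α i)
        + (∑ k, A k α * H k i j) + (∑ k, h j k * B k α i) = 0) (α : ι) (i j : Fin 3) :
    ∑ μ, gt α μ * D μ i j + ∑ μ, A j μ * F μ α i - 1 / 2 * ∑ k, A k α * eps k i j
      + h0 * B j α i = 0 := by
  have e := heq5 α i j
  simp only [hround, hH, hg_symm _ α, ite_mul, zero_mul, Finset.sum_ite_eq, Finset.mem_univ,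
    if_true] at e
  rw [sum_effMetric_mul hgt]
  simp only [Fin.sum_univ_three] at e ⊢
  linear_combination e

theorem D_eq_zero_of_compat5 [DecidableEq ι] (hround : ∀ i j, h i j = if i = j then h0 else 0)
    (hDh0 : ∀ α i j, Dh α i j = 0) (hD_symm : ∀ μ i j, D μ i j = D μ j i)
    (hgt_inv' : ∀ μ ν, ∑ ρ, gtinv μ ρ * gt ρ ν = if μ = ν then 1 else 0)
    (h5 : ∀ α i j, ∑ μ, gt α μ * D μ i j + ∑ μ, A j μ * F μ α i
      - 1 / 2 * ∑ k, A k α * eps k i j + h0 * B j α i = 0)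
    (heq4 : ∀ α i j, Dh α i j + (∑ μ, A i μ * F μ α j) + (∑ μ, A j μ * F μ α i)
        + (∑ k, h k j * B k α i) + (∑ k, h i k * B k α j) = 0) (μ : ι) (i j : Fin 3) :
    D μ i j = 0 := by
  have hgtD (α : ι) : ∑ ν, gt α ν * D ν i j = 0 := by
    have e4 := heq4 α i j
    simp only [hDh0, hround, ite_mul, zero_mul, Finset.sum_ite_eq, Finset.sum_ite_eq',
      Finset.mem_univ, if_true] at e4
    have hsymm : ∑ ν, gt α ν * D ν j i = ∑ ν, gt α ν * D ν i j :=
      Finset.sum_congr rfl fun ν _ => by rw [hD_symm]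
    have heps : ∑ k, A k α * eps k j i = -∑ k, A k α * eps k i j := by
      simp only [eps_swap_last _ i j, mul_neg, Finset.sum_neg_distrib]
    linear_combination 1 / 2 * h5 α i j + 1 / 2 * h5 α j i - 1 / 2 * e4 - 1 / 2 * hsymm
      + 1 / 4 * heps
  simpa using eq_sum_mul_of_sum_mul_eq hgt_inv' hgtD μ

theorem B_eq_of_compat5 (hh0 : h0 ≠ 0) (hD : ∀ μ i j, D μ i j = 0)
    (h5 : ∀ α i j, ∑ μ, gt α μ * D μ i j + ∑ μ, A j μ * F μ α i
      - 1 / 2 * ∑ k, A k α * eps k i j + h0 * B j α i = 0) (k : Fin 3) (α : ι) (i : Fin 3) :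
    B k α i = -(1 / h0) * (∑ μ, A k μ * F μ α i) - (1 / (2 * h0)) * ∑ j, A j α * eps k i j := by
  have e := h5 α i k
  simp only [hD, mul_zero, Finset.sum_const_zero, zero_add] at e
  simp only [eps_swap_ends _ i k, mul_neg, Finset.sum_neg_distrib]
  field_simp
  linear_combination 2 * e

theorem sum_mul_B_eq (hB : ∀ k α i, B k α i = -(1 / h0) * (∑ μ, A k μ * F μ α i)
      - (1 / (2 * h0)) * ∑ j, A j α * eps k i j) (α β : ι) (i : Fin 3) :
    ∑ k, A k β * B k α i = -(1 / h0) * ∑ k, A k β * ∑ μ, A k μ * F μ α i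
      - 1 / (2 * h0) * ∑ j, ∑ k, A j α * A k β * eps i j k := by
  simp only [hB, Fin.sum_univ_three]
  fin_cases i <;> norm_num [eps] <;> ring

theorem effMetric_mul_F_antisymm_of_compat3 (hg_symm : ∀ μ ν, g μ ν = g ν μ)
    (hgt : ∀ μ ν, gt μ ν = g μ ν - 1 / h0 * ∑ i, A i μ * A i ν)
    (hB : ∀ k α i, B k α i = -(1 / h0) * (∑ μ, A k μ * F μ α i)
      - (1 / (2 * h0)) * ∑ j, A j α * eps k i j)
    (heq3 : ∀ α β i, (∑ μ, g μ β * F μ α i) + (∑ μ, g α μ * F μ β i)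
        + (∑ k, A k β * B k α i) + (∑ k, A k α * B k β i) = 0) (α β : ι) (i : Fin 3) :
    ∑ μ, gt β μ * F μ α i + ∑ μ, gt α μ * F μ β i = 0 := by
  have e := heq3 α β i
  simp only [hg_symm _ β, sum_mul_B_eq hB] at e
  rw [sum_effMetric_mul hgt, sum_effMetric_mul hgt]
  linear_combination e + 1 / (2 * h0) * sum_sum_eps_comm A α β i

theorem compat2_of_round (hround : ∀ i j, h i j = if i = j then h0 else 0)
    (hgt : ∀ μ ν, gt μ ν = g μ ν - 1 / h0 * ∑ i, A i μ * A i ν)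
    (hB : ∀ k α i, B k α i = -(1 / h0) * (∑ μ, A k μ * F μ α i)
      - (1 / (2 * h0)) * ∑ j, A j α * eps k i j)
    (heq2 : ∀ α i β, DA α i β - (∑ μ, A i μ * Γ μ α β) + (∑ μ, g β μ * F μ α i)
        + (∑ k, A k β * B k α i) + (∑ k, h k i * E k α β) = 0) (α : ι) (i : Fin 3) (β : ι) :
    DA α i β - ∑ μ, A i μ * Γ μ α β + ∑ μ, gt β μ * F μ α i
      - 1 / (2 * h0) * ∑ j, ∑ k, A j α * A k β * eps i j k + h0 * E i α β = 0 := by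
  have e := heq2 α i β
  simp only [hround, sum_mul_B_eq hB, ite_mul, zero_mul, Finset.sum_ite_eq', Finset.mem_univ,
    if_true] at e
  rw [sum_effMetric_mul hgt]
  linear_combination e

theorem effMetric_mul_F_eq_of_compat2 (hΓ_symm : ∀ μ α β, Γ μ α β = Γ μ β α)
    (hE_symm : ∀ i α β, E i α β = E i β α)
    (h2 : ∀ α i β, DA α i β - ∑ μ, A i μ * Γ μ α β + ∑ μ, gt β μ * F μ α i
      - 1 / (2 * h0) * ∑ j, ∑ k, A j α * A k β * eps i j k + h0 * E i α β = 0)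
    (h3 : ∀ α β i, ∑ μ, gt β μ * F μ α i + ∑ μ, gt α μ * F μ β i = 0) (α β : ι) (i : Fin 3) :
    ∑ μ, gt α μ * F μ β i
      = 1 / 2 * (DA α i β - DA β i α - 1 / h0 * ∑ j, ∑ k, A j α * A k β * eps i j k) := by
  have hAΓ : ∑ μ, A i μ * Γ μ β α = ∑ μ, A i μ * Γ μ α β :=
    Finset.sum_congr rfl fun μ _ => by rw [hΓ_symm]
  linear_combination (-1 / 2) * h2 α i β + 1 / 2 * h2 β i α + 1 / 2 * h3 α β i + 1 / 2 * hAΓ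
    - h0 / 2 * hE_symm i β α + 1 / (4 * h0) * sum_sum_eps_comm A β α i

theorem E_eq_of_compat2 (hh0 : h0 ≠ 0) (hΓ_symm : ∀ μ α β, Γ μ α β = Γ μ β α)
    (hE_symm : ∀ i α β, E i α β = E i β α)
    (h2 : ∀ α i β, DA α i β - ∑ μ, A i μ * Γ μ α β + ∑ μ, gt β μ * F μ α i
      - 1 / (2 * h0) * ∑ j, ∑ k, A j α * A k β * eps i j k + h0 * E i α β = 0)
    (h3 : ∀ α β i, ∑ μ, gt β μ * F μ α i + ∑ μ, gt α μ * F μ β i = 0) (k : Fin 3) (α β : ι) :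
    E k α β = -(1 / (2 * h0)) * (DA α k β + DA β k α - 2 * ∑ μ, A k μ * Γ μ α β) := by
  have hAΓ : ∑ μ, A k μ * Γ μ β α = ∑ μ, A k μ * Γ μ α β :=
    Finset.sum_congr rfl fun μ _ => by rw [hΓ_symm]
  field_simp
  linear_combination h2 α k β + h2 β k α - h3 α β k + hAΓ - h0 * hE_symm k β α
    + 1 / (2 * h0) * sum_sum_eps_comm A β α k

theorem F_eq_of_effMetric_mul [DecidableEq ι] (hgt_symm : ∀ μ ν, gt μ ν = gt ν μ)
    (hgt_inv' : ∀ μ ν, ∑ ρ, gtinv μ ρ * gt ρ ν = if μ = ν then 1 else 0)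
    (hgtF : ∀ α β i, ∑ μ, gt α μ * F μ β i
      = 1 / 2 * (DA α i β - DA β i α - 1 / h0 * ∑ j, ∑ k, A j α * A k β * eps i j k))
    (μ β : ι) (i : Fin 3) :
    F μ β i = 1 / 2 * ∑ α, gtinv α μ *
        (DA α i β - DA β i α - 1 / h0 * ∑ j, ∑ k, A j α * A k β * eps i j k) := by
  rw [eq_sum_mul_of_sum_mul_eq hgt_inv' (fun α => hgtF α β i) μ, Finset.mul_sum]
  refine Finset.sum_congr rfl fun α _ => ?_
  rw [symm_of_sum_mul_eq hgt_symm hgt_inv']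
  ring

theorem compat1_of_round (hg_symm : ∀ μ ν, g μ ν = g ν μ)
    (hgt : ∀ μ ν, gt μ ν = g μ ν - 1 / h0 * ∑ i, A i μ * A i ν)
    (hE : ∀ k α β, E k α β = -(1 / (2 * h0)) * (DA α k β + DA β k α - 2 * ∑ μ, A k μ * Γ μ α β))
    (heq1 : ∀ α β γ, Dg α β γ - (∑ μ, g μ γ * Γ μ α β) - (∑ μ, g β μ * Γ μ α γ)
        + (∑ i, A i γ * E i α β) + (∑ i, A i β * E i α γ) = 0) (α β γ : ι) :
    ∑ μ, gt γ μ * Γ μ α β + ∑ μ, gt β μ * Γ μ α γ = Dg α β γ - 1 / (2 * h0) *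
      (∑ i, A i γ * (DA α i β + DA β i α) + ∑ i, A i β * (DA α i γ + DA γ i α)) := by
  have e := heq1 α β γ
  simp only [hg_symm _ γ, hE, Fin.sum_univ_three] at e
  rw [sum_effMetric_mul hgt, sum_effMetric_mul hgt]
  simp only [Fin.sum_univ_three]
  linear_combination -e

theorem two_mul_effMetric_mul_Γ (hΓ_symm : ∀ μ α β, Γ μ α β = Γ μ β α)
    (h1 : ∀ α β γ, ∑ μ, gt γ μ * Γ μ α β + ∑ μ, gt β μ * Γ μ α γ = Dg α β γ
      - 1 / (2 * h0) * (∑ i, A i γ * (DA α i β + DA β i α) + ∑ i, A i β * (DA α i γ + DA γ i α)))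
    (γ α β : ι) :
    2 * ∑ μ, gt γ μ * Γ μ α β = Dg α β γ + Dg β α γ - Dg γ α β
      - 1 / h0 * ∑ i, A i γ * (DA α i β + DA β i α) := by
  have := koszul_formula (X := fun c a b => ∑ μ, gt c μ * Γ μ a b) (Y := fun a b c => Dg a b c
      - 1 / (2 * h0) * (∑ i, A i c * (DA a i b + DA b i a) + ∑ i, A i b * (DA a i c + DA c i a)))
    (fun c a b => Finset.sum_congr rfl fun μ _ => by rw [hΓ_symm]) h1 α β γ
  simp only [Fin.sum_univ_three] at this ⊢
  linear_combination this

theorem Γ_eq_of_effMetric_mul [DecidableEq ι]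
    (hgt_inv' : ∀ μ ν, ∑ ρ, gtinv μ ρ * gt ρ ν = if μ = ν then 1 else 0)
    (hDgt : ∀ α μ ν, Dgt α μ ν = Dg α μ ν - 1 / h0 * ∑ i, (DA α i μ * A i ν + A i μ * DA α i ν))
    (hΓt : ∀ σ μ ν, Γt σ μ ν = 1 / 2 * ∑ ρ, gtinv σ ρ * (Dgt μ ν ρ + Dgt ν μ ρ - Dgt ρ μ ν))
    (hgtΓ : ∀ γ α β, 2 * ∑ μ, gt γ μ * Γ μ α β = Dg α β γ + Dg β α γ - Dg γ α β
      - 1 / h0 * ∑ i, A i γ * (DA α i β + DA β i α))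
    (hgtF : ∀ α β i, ∑ μ, gt α μ * F μ β i
      = 1 / 2 * (DA α i β - DA β i α - 1 / h0 * ∑ j, ∑ k, A j α * A k β * eps i j k))
    (σ μ ν : ι) :
    Γ σ μ ν = Γt σ μ ν - 1 / h0 * ∑ i, (A i μ * F σ ν i + A i ν * F σ μ i) := by
  -- `Γ + h₀⁻¹ (A F + A F)` solves the linear system `g̃ X = (Dg̃ + Dg̃ - Dg̃) / 2` defining `Γ̃`
  have key (γ : ι) : ∑ ρ, gt γ ρ * (Γ ρ μ ν + 1 / h0 * ∑ i, (A i μ * F ρ ν i + A i ν * F ρ μ i))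
      = 1 / 2 * (Dgt μ ν γ + Dgt ν μ γ - Dgt γ μ ν) := by
    have hsplit : ∑ ρ, gt γ ρ * (Γ ρ μ ν + 1 / h0 * ∑ i, (A i μ * F ρ ν i + A i ν * F ρ μ i))
        = ∑ ρ, gt γ ρ * Γ ρ μ ν + 1 / h0 * ∑ i, (A i μ * ∑ ρ, gt γ ρ * F ρ ν i
          + A i ν * ∑ ρ, gt γ ρ * F ρ μ i) := by
      simp only [Fin.sum_univ_three, mul_add, Finset.sum_add_distrib, Finset.mul_sum]
      simp only [mul_left_comm]
    have htriple := sum_mul_sum_sum_eps_add A μ ν γ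
    have hΓγ := hgtΓ γ μ ν
    rw [hsplit]
    simp only [hgtF, hDgt, Fin.sum_univ_three] at htriple hΓγ ⊢
    linear_combination 1 / 2 * hΓγ - 1 / (2 * h0 ^ 2) * htriple
  have hsol := eq_sum_mul_of_sum_mul_eq hgt_inv' key σ
  simp only [mul_left_comm (gtinv σ _)] at hsol
  rw [hΓt, Finset.mul_sum]
  linear_combination hsol

end Compatibility

theorem stmt2_general (n : ℕ)
    (g : Fin n → Fin n → ℝ)
    (h hinv : Fin 3 → Fin 3 → ℝ)
    (A : Fin 3 → Fin n → ℝ)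
    (Dg : Fin n → Fin n → Fin n → ℝ)
    (Dh : Fin n → Fin 3 → Fin 3 → ℝ)
    (DA : Fin n → Fin 3 → Fin n → ℝ)
    (hg_symm : ∀ μ ν, g μ ν = g ν μ)
    (hh_inv' : ∀ i j, ∑ k, hinv i k * h k j = if i = j then 1 else 0)
    -- the constant round fuzzy sphere metric
    (h0 : ℝ) (hh0 : 0 < h0)
    (hround : ∀ i j, h i j = if i = j then h0 else 0)
    (hDh0 : ∀ α i j, Dh α i j = 0)
    -- the effective metric g̃ and its inverse
    (gt gtinv : Fin n → Fin n → ℝ)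
    (hgt : ∀ μ ν, gt μ ν = g μ ν - ∑ i, ∑ j, hinv i j * A i μ * A j ν)
    (hgt_inv' : ∀ μ ν, ∑ ρ, gtinv μ ρ * gt ρ ν = if μ = ν then 1 else 0)
    -- Dg̃ and Γ̃
    (Dgt : Fin n → Fin n → Fin n → ℝ)
    (hDgt : ∀ α μ ν, Dgt α μ ν = Dg α μ ν
        + (∑ i, ∑ j, ∑ k, ∑ l, hinv i k * hinv j l * Dh α k l * A i μ * A j ν)
        - ∑ i, ∑ j, hinv i j * (DA α i μ * A j ν + A i μ * DA α j ν))
    (Γt : Fin n → Fin n → Fin n → ℝ)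
    (hΓt : ∀ σ μ ν, Γt σ μ ν = (1/2) * ∑ ρ, gtinv σ ρ * (Dgt μ ν ρ + Dgt ν μ ρ - Dgt ρ μ ν))
    -- the unknown connection coefficients
    (Γ : Fin n → Fin n → Fin n → ℝ)
    (F : Fin n → Fin n → Fin 3 → ℝ)
    (D : Fin n → Fin 3 → Fin 3 → ℝ)
    (E : Fin 3 → Fin n → Fin n → ℝ)
    (B : Fin 3 → Fin n → Fin 3 → ℝ)
    (H : Fin 3 → Fin 3 → Fin 3 → ℝ)
    -- torsion-free symmetry conditions
    (hΓ_symm : ∀ μ α β, Γ μ α β = Γ μ β α)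
    (hD_symm : ∀ μ i j, D μ i j = D μ j i)
    (hE_symm : ∀ i α β, E i α β = E i β α)
    (hH_tor : ∀ i j k, H i j k - H i k j + eps i j k = 0)
    -- the six metric-compatibility equations
    (heq1 : ∀ α β γ, Dg α β γ - (∑ μ, g μ γ * Γ μ α β) - (∑ μ, g β μ * Γ μ α γ)
        + (∑ i, A i γ * E i α β) + (∑ i, A i β * E i α γ) = 0)
    (heq2 : ∀ α i β, DA α i β - (∑ μ, A i μ * Γ μ α β) + (∑ μ, g β μ * F μ α i)
        + (∑ k, A k β * B k α i) + (∑ k, h k i * E k α β) = 0)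
    (heq3 : ∀ α β i, (∑ μ, g μ β * F μ α i) + (∑ μ, g α μ * F μ β i)
        + (∑ k, A k β * B k α i) + (∑ k, A k α * B k β i) = 0)
    (heq4 : ∀ α i j, Dh α i j + (∑ μ, A i μ * F μ α j) + (∑ μ, A j μ * F μ α i)
        + (∑ k, h k j * B k α i) + (∑ k, h i k * B k α j) = 0)
    (heq5 : ∀ α i j, (∑ μ, g μ α * D μ i j) + (∑ μ, A j μ * F μ α i)
        + (∑ k, A k α * H k i j) + (∑ k, h j k * B k α i) = 0)
    (heq6 : ∀ i j k, (∑ μ, A j μ * D μ i k) + (∑ μ, A k μ * D μ i j)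
        + (∑ l, h l k * H l i j) + (∑ l, h l j * H l i k) = 0) :
    -- the unique simplified solution
    (∀ μ' β i, F μ' β i = (1/2) * ∑ α, gtinv α μ' *
        (DA α i β - DA β i α - (1/h0) * ∑ j, ∑ k, A j α * A k β * eps i j k)) ∧
    (∀ σ μ ν, Γ σ μ ν = Γt σ μ ν - (1/h0) * ∑ i, (A i μ * F σ ν i + A i ν * F σ μ i)) ∧
    (∀ μ i j, D μ i j = 0) ∧
    (∀ k α β, E k α β = -(1/(2*h0)) *
        (DA α k β + DA β k α - 2 * ∑ μ, A k μ * Γ μ α β)) ∧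
    (∀ k α i, B k α i = -(1/h0) * (∑ μ, A k μ * F μ α i)
        - (1/(2*h0)) * ∑ j, A j α * eps k i j) ∧
    (∀ i j k, H i j k = -(1/2) * eps i j k) := by
  have hh0' : h0 ≠ 0 := hh0.ne'
  have hinv_eq := inv_eq_of_round hh0' hround hh_inv'
  have hgt' := effMetric_eq_of_round hinv_eq hgt
  have hH := H_eq_of_compat6 hh0' hround hD_symm hH_tor heq6
  have h5 := compat5_of_round hround hg_symm hgt' hH heq5
  have hD := D_eq_zero_of_compat5 hround hDh0 hD_symm hgt_inv' h5 heq4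
  have hB := B_eq_of_compat5 hh0' hD h5
  have h3 := effMetric_mul_F_antisymm_of_compat3 hg_symm hgt' hB heq3
  have h2 := compat2_of_round hround hgt' hB heq2
  have hgtF := effMetric_mul_F_eq_of_compat2 hΓ_symm hE_symm h2 h3
  have hE := E_eq_of_compat2 hh0' hΓ_symm hE_symm h2 h3
  have hgtΓ := two_mul_effMetric_mul_Γ hΓ_symm (compat1_of_round hg_symm hgt' hE heq1)
  refine ⟨F_eq_of_effMetric_mul (effMetric_symm hg_symm hgt') hgt_inv' hgtF,
    Γ_eq_of_effMetric_mul hgt_inv' (effMetric_deriv_eq_of_round hinv_eq hDh0 hDgt) hΓt hgtΓ hgtF,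
    hD, hE, hB, fun i j k => ?_⟩
  simpa [hD] using hH j k i

/-- In the constant round case `h_{ij} = h δ_{ij}`, `Dh = 0`, the unique solution
`(Γ, F, D, E, B, H)` of the torsion-free symmetry conditions and the six
metric-compatibility equations is given by the stated simplified formulas. -/
theorem stmt2 (n : ℕ) (hn : 1 ≤ n)
    (g ginv : Fin n → Fin n → ℝ)
    (h hinv : Fin 3 → Fin 3 → ℝ)
    (A : Fin 3 → Fin n → ℝ)
    (Dg : Fin n → Fin n → Fin n → ℝ)
    (Dh : Fin n → Fin 3 → Fin 3 → ℝ)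
    (DA : Fin n → Fin 3 → Fin n → ℝ)
    (hg_symm : ∀ μ ν, g μ ν = g ν μ)
    (hh_symm : ∀ i j, h i j = h j i)
    (hg_inv : ∀ μ ν, ∑ ρ, g μ ρ * ginv ρ ν = if μ = ν then 1 else 0)
    (hg_inv' : ∀ μ ν, ∑ ρ, ginv μ ρ * g ρ ν = if μ = ν then 1 else 0)
    (hh_inv : ∀ i j, ∑ k, h i k * hinv k j = if i = j then 1 else 0)
    (hh_inv' : ∀ i j, ∑ k, hinv i k * h k j = if i = j then 1 else 0)
    (hDg_symm : ∀ α β γ, Dg α β γ = Dg α γ β)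
    (hDh_symm : ∀ α i j, Dh α i j = Dh α j i)
    -- the constant round fuzzy sphere metric
    (h0 : ℝ) (hh0 : 0 < h0)
    (hround : ∀ i j, h i j = if i = j then h0 else 0)
    (hDh0 : ∀ α i j, Dh α i j = 0)
    -- the effective metric g̃ and its inverse
    (gt gtinv : Fin n → Fin n → ℝ)
    (hgt : ∀ μ ν, gt μ ν = g μ ν - ∑ i, ∑ j, hinv i j * A i μ * A j ν)
    (hgt_inv : ∀ μ ν, ∑ ρ, gt μ ρ * gtinv ρ ν = if μ = ν then 1 else 0)
    (hgt_inv' : ∀ μ ν, ∑ ρ, gtinv μ ρ * gt ρ ν = if μ = ν then 1 else 0)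
    -- Dg̃ and Γ̃
    (Dgt : Fin n → Fin n → Fin n → ℝ)
    (hDgt : ∀ α μ ν, Dgt α μ ν = Dg α μ ν
        + (∑ i, ∑ j, ∑ k, ∑ l, hinv i k * hinv j l * Dh α k l * A i μ * A j ν)
        - ∑ i, ∑ j, hinv i j * (DA α i μ * A j ν + A i μ * DA α j ν))
    (Γt : Fin n → Fin n → Fin n → ℝ)
    (hΓt : ∀ σ μ ν, Γt σ μ ν = (1/2) * ∑ ρ, gtinv σ ρ * (Dgt μ ν ρ + Dgt ν μ ρ - Dgt ρ μ ν))
    -- the unknown connection coefficients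
    (Γ : Fin n → Fin n → Fin n → ℝ)
    (F : Fin n → Fin n → Fin 3 → ℝ)
    (D : Fin n → Fin 3 → Fin 3 → ℝ)
    (E : Fin 3 → Fin n → Fin n → ℝ)
    (B : Fin 3 → Fin n → Fin 3 → ℝ)
    (H : Fin 3 → Fin 3 → Fin 3 → ℝ)
    -- torsion-free symmetry conditions
    (hΓ_symm : ∀ μ α β, Γ μ α β = Γ μ β α)
    (hD_symm : ∀ μ i j, D μ i j = D μ j i)
    (hE_symm : ∀ i α β, E i α β = E i β α)
    (hH_tor : ∀ i j k, H i j k - H i k j + eps i j k = 0)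
    -- the six metric-compatibility equations
    (heq1 : ∀ α β γ, Dg α β γ - (∑ μ, g μ γ * Γ μ α β) - (∑ μ, g β μ * Γ μ α γ)
        + (∑ i, A i γ * E i α β) + (∑ i, A i β * E i α γ) = 0)
    (heq2 : ∀ α i β, DA α i β - (∑ μ, A i μ * Γ μ α β) + (∑ μ, g β μ * F μ α i)
        + (∑ k, A k β * B k α i) + (∑ k, h k i * E k α β) = 0)
    (heq3 : ∀ α β i, (∑ μ, g μ β * F μ α i) + (∑ μ, g α μ * F μ β i)
        + (∑ k, A k β * B k α i) + (∑ k, A k α * B k β i) = 0)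
    (heq4 : ∀ α i j, Dh α i j + (∑ μ, A i μ * F μ α j) + (∑ μ, A j μ * F μ α i)
        + (∑ k, h k j * B k α i) + (∑ k, h i k * B k α j) = 0)
    (heq5 : ∀ α i j, (∑ μ, g μ α * D μ i j) + (∑ μ, A j μ * F μ α i)
        + (∑ k, A k α * H k i j) + (∑ k, h j k * B k α i) = 0)
    (heq6 : ∀ i j k, (∑ μ, A j μ * D μ i k) + (∑ μ, A k μ * D μ i j)
        + (∑ l, h l k * H l i j) + (∑ l, h l j * H l i k) = 0) :
    -- the unique simplified solution
    (∀ μ' β i, F μ' β i = (1/2) * ∑ α, gtinv α μ' *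
        (DA α i β - DA β i α - (1/h0) * ∑ j, ∑ k, A j α * A k β * eps i j k)) ∧
    (∀ σ μ ν, Γ σ μ ν = Γt σ μ ν - (1/h0) * ∑ i, (A i μ * F σ ν i + A i ν * F σ μ i)) ∧
    (∀ μ i j, D μ i j = 0) ∧
    (∀ k α β, E k α β = -(1/(2*h0)) *
        (DA α k β + DA β k α - 2 * ∑ μ, A k μ * Γ μ α β)) ∧
    (∀ k α i, B k α i = -(1/h0) * (∑ μ, A k μ * F μ α i)
        - (1/(2*h0)) * ∑ j, A j α * eps k i j) ∧
    (∀ i j k, H i j k = -(1/2) * eps i j k) :=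
  stmt2_general n g h hinv A Dg Dh DA hg_symm hh_inv' h0 hh0 hround hDh0 gt gtinv hgt hgt_inv' Dgt
    hDgt Γt hΓt Γ F D E B H hΓ_symm hD_symm hE_symm hH_tor heq1 heq2 heq3 heq4 heq5 heq6
end
end

section
/- Let l ≥ 1 and let f be a rank-l tensor that is totally symmetric and traceless. Then for each i ∈ {1,2,3}, the rank-l tensor D_i f is again totally symmetric and traceless. -/
/-!
A totally symmetric tensor only sees the multiset of its indices, and deleting the `r`-th index
of `v` and appending `k` turns that multiset into the one of `v` with `v r` replaced by `k`; so
permuting `v` merely permutes the terms of `D_i f`. For tracelessness, contract positions `r ≠ s`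
and split the sum over the deleted position `p`. If `p ∉ {r, s}`, the contraction survives inside
`f` and vanishes there. If `p ∈ {r, s}`, the term is `∑ k m, ε_{m i k} F k m` where
`F k m = F m k` by symmetry of `f` (both index multisets are `{k, m}` plus the entries of `v`
off `{r, s}`), and this vanishes by antisymmetry of `ε`.
-/

noncomputable section

/-- The totally antisymmetric Levi-Civita symbol on three indices with ε₀₁₂ = 1
(indices written 1,2,3 in the paper). -/
def epsC (i j k : Fin 3) : ℂ :=
  ((((i : ℤ) - (j : ℤ)) * ((j : ℤ) - (k : ℤ)) * ((k : ℤ) - (i : ℤ))) / 2 : ℤ)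

/-- The index tuple obtained from `v : Fin l → Fin 3` by deleting the `r`-th entry, keeping
the remaining entries in order, and appending `k` as the new last entry. -/
def removeAppend (l : ℕ) (v : Fin l → Fin 3) (r : Fin l) (k : Fin 3) : Fin l → Fin 3 :=
  fun t =>
    if h : (t : ℕ) + 1 < l then
      (if (t : ℕ) < (r : ℕ) then v t else v ⟨(t : ℕ) + 1, h⟩)
    else k

/-- The operator `D_i` on rank-`l` tensors:
`(D_i f)_{i₁…i_l} = −∑_{r=1}^{l} ∑_{k} ε_{k i i_r} f_{i₁…î_r…i_l k}`. -/
def Dop (l : ℕ) (i : Fin 3) (f : (Fin l → Fin 3) → ℂ) : (Fin l → Fin 3) → ℂ :=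
  fun v => -∑ r : Fin l, ∑ k : Fin 3, epsC k i (v r) * f (removeAppend l v r k)

/-- A rank-`l` tensor is totally symmetric if its components are invariant under every
permutation of the indices. -/
def IsTotallySymmetric (l : ℕ) (f : (Fin l → Fin 3) → ℂ) : Prop :=
  ∀ (σ : Equiv.Perm (Fin l)) (v : Fin l → Fin 3), f (v ∘ σ) = f v

/-- A rank-`l` tensor is traceless if contracting any two of its indices against the
Kronecker delta gives zero. -/
def IsTraceless (l : ℕ) (f : (Fin l → Fin 3) → ℂ) : Prop :=
  ∀ (r s : Fin l), r ≠ s → ∀ v : Fin l → Fin 3,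
    ∑ k : Fin 3, f (fun t => if t = r then k else if t = s then k else v t) = 0

open Function

section Entries

variable {ι α : Type*} [Fintype ι]

def entries (v : ι → α) : Multiset α := Multiset.map v Finset.univ.val

lemma card_fiber_eq_count_entries [DecidableEq α] (v : ι → α) (a : α) :
    Fintype.card {t // v t = a} = (entries v).count a := by
  rw [entries, Multiset.count_map, Fintype.card_subtype]
  simp only [eq_comm]
  rfl

lemma exists_perm_of_entries_eq [DecidableEq α] {v w : ι → α} (h : entries v = entries w) :
    ∃ σ : Equiv.Perm ι, v = w ∘ σ := by
  have e : ∀ a, {t // v t = a} ≃ {t // w t = a} := fun a =>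
    Fintype.equivOfCardEq (by rw [card_fiber_eq_count_entries, card_fiber_eq_count_entries, h])
  exact ⟨(Equiv.sigmaFiberEquiv v).symm.trans
      ((Equiv.sigmaCongrRight e).trans (Equiv.sigmaFiberEquiv w)),
    funext fun t => (e (v t) ⟨t, rfl⟩).2.symm⟩

lemma entries_comp_perm (v : ι → α) (σ : Equiv.Perm ι) : entries (v ∘ σ) = entries v := by
  rw [entries, ← Multiset.map_map, Multiset.map_univ_val_equiv, entries]

lemma cons_entries_update [DecidableEq ι] (v : ι → α) (j : ι) (x : α) :
    v j ::ₘ entries (update v j x) = x ::ₘ entries v := by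
  have hu := Multiset.cons_erase (Finset.mem_univ_val j)
  have hrest : (Finset.univ.val.erase j).map (update v j x) = (Finset.univ.val.erase j).map v :=
    Multiset.map_congr rfl fun t ht =>
      update_of_ne ((Finset.univ.nodup.mem_erase_iff.mp ht).1) x v
  rw [entries, entries, ← hu, Multiset.map_cons, Multiset.map_cons, update_self, hrest,
    Multiset.cons_swap]

lemma cons_entries_update_comm [DecidableEq ι] (v : ι → α) (j : ι) (x y : α) :
    x ::ₘ entries (update v j y) = y ::ₘ entries (update v j x) := by
  rw [← Multiset.cons_inj_right (v j), Multiset.cons_swap, cons_entries_update,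
    Multiset.cons_swap (v j), cons_entries_update, Multiset.cons_swap]

lemma entries_eq_cons_comp_succAbove {n : ℕ} (v : Fin (n + 1) → α) (r : Fin (n + 1)) :
    entries v = v r ::ₘ entries (v ∘ r.succAbove) := by
  rw [entries, Fin.univ_succAbove n r, Finset.cons_val, Multiset.map_cons, Finset.map_val,
    Multiset.map_map]
  rfl

lemma entries_snoc {n : ℕ} (g : Fin n → α) (k : α) :
    entries (Fin.snoc g k : Fin (n + 1) → α) = k ::ₘ entries g := by
  rw [entries_eq_cons_comp_succAbove _ (Fin.last n), Fin.succAbove_last, Fin.snoc_last,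
    Fin.snoc_comp_castSucc]

end Entries

lemma removeAppend_eq_snoc {n : ℕ} (v : Fin (n + 1) → Fin 3) (r : Fin (n + 1)) (k : Fin 3) :
    removeAppend (n + 1) v r k = Fin.snoc (v ∘ r.succAbove) k := by
  funext t
  refine Fin.lastCases ?_ (fun j => ?_) t
  · simp [removeAppend]
  · rw [Fin.snoc_castSucc, comp_apply, Fin.succAbove, removeAppend, Fin.val_castSucc,
      dif_pos (by omega)]
    by_cases hb : j.castSucc < r
    · rw [if_pos hb, if_pos (by simpa [Fin.lt_def] using hb)]
    · rw [if_neg hb, if_neg (by simpa [Fin.lt_def] using hb)]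
      rfl

lemma cons_entries_removeAppend {l : ℕ} (v : Fin l → Fin 3) (r : Fin l) (k : Fin 3) :
    v r ::ₘ entries (removeAppend l v r k) = k ::ₘ entries v := by
  rcases l with _ | n
  · exact r.elim0
  rw [removeAppend_eq_snoc, entries_snoc, Multiset.cons_swap,
    ← entries_eq_cons_comp_succAbove]

lemma entries_removeAppend_comp_perm {l : ℕ} (v : Fin l → Fin 3) (σ : Equiv.Perm (Fin l))
    (r : Fin l) (k : Fin 3) :
    entries (removeAppend l (v ∘ σ) r k) = entries (removeAppend l v (σ r) k) := by
  rw [← Multiset.cons_inj_right (v (σ r)), cons_entries_removeAppend,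
    ← entries_comp_perm v σ]
  exact cons_entries_removeAppend (v ∘ σ) r k

lemma IsTotallySymmetric.apply_eq_of_entries_eq {l : ℕ} {f : (Fin l → Fin 3) → ℂ}
    (hf : IsTotallySymmetric l f) {v w : Fin l → Fin 3} (h : entries v = entries w) :
    f v = f w := by
  obtain ⟨σ, rfl⟩ := exists_perm_of_entries_eq h
  exact hf σ w

theorem isTotallySymmetric_dop {l : ℕ} {f : (Fin l → Fin 3) → ℂ}
    (hf : IsTotallySymmetric l f) (i : Fin 3) : IsTotallySymmetric l (Dop l i f) := by
  intro σ v
  refine neg_inj.mpr (Fintype.sum_equiv σ _ _ fun r => Finset.sum_congr rfl fun k _ => ?_)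
  rw [hf.apply_eq_of_entries_eq (entries_removeAppend_comp_perm v σ r k)]
  rfl

lemma epsC_swap (a b c : Fin 3) : epsC a b c = -epsC c b a := by
  fin_cases a <;> fin_cases b <;> fin_cases c <;> norm_num [epsC]

lemma sum_sum_epsC_mul_eq_zero_of_symm (i : Fin 3) (F : Fin 3 → Fin 3 → ℂ)
    (hF : ∀ k m, F k m = F m k) : ∑ k, ∑ m, epsC m i k * F k m = 0 := by
  refine self_eq_neg.mp ?_
  conv_lhs => rw [Finset.sum_comm]
  simp only [← Finset.sum_neg_distrib]
  refine Finset.sum_congr rfl fun k _ => Finset.sum_congr rfl fun m _ => ?_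
  rw [epsC_swap, hF, neg_mul]

lemma isTraceless_iff_sum_update_update {l : ℕ} {f : (Fin l → Fin 3) → ℂ} :
    IsTraceless l f ↔
      ∀ r s : Fin l, r ≠ s → ∀ v : Fin l → Fin 3,
        ∑ k, f (update (update v s k) r k) = 0 := by
  have h (v : Fin l → Fin 3) (r s : Fin l) (k : Fin 3) :
      update (update v s k) r k = fun t => if t = r then k else if t = s then k else v t := by
    ext t
    simp only [update_apply]
  simp only [IsTraceless, h]

lemma removeAppend_update_update_self {n : ℕ} (v : Fin (n + 1) → Fin 3) {r s : Fin (n + 1)}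
    {j : Fin n} (hj : r.succAbove j = s) (k m : Fin 3) :
    removeAppend (n + 1) (update (update v s k) r k) r m =
      Fin.snoc (update (v ∘ r.succAbove) j k) m := by
  rw [removeAppend_eq_snoc, update_comp_eq_of_forall_ne _ _ (Fin.succAbove_ne r), ← hj,
    update_comp_eq_of_injective _ Fin.succAbove_right_injective]

lemma removeAppend_update_update_of_ne {n : ℕ} (v : Fin (n + 1) → Fin 3) {r s p : Fin (n + 1)}
    {jr js : Fin n} (hjr : p.succAbove jr = r) (hjs : p.succAbove js = s) (k m : Fin 3) :
    removeAppend (n + 1) (update (update v s k) r k) p m =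
      update (update (removeAppend (n + 1) v p m) js.castSucc k) jr.castSucc k := by
  rw [removeAppend_eq_snoc, removeAppend_eq_snoc, ← hjr, ← hjs,
    update_comp_eq_of_injective _ Fin.succAbove_right_injective,
    update_comp_eq_of_injective _ Fin.succAbove_right_injective, Fin.snoc_update, Fin.snoc_update]

lemma sum_epsC_mul_removeAppend_update_update_self {n : ℕ} {f : (Fin (n + 1) → Fin 3) → ℂ}
    (hf : IsTotallySymmetric (n + 1) f) (i : Fin 3) (v : Fin (n + 1) → Fin 3)
    {p s : Fin (n + 1)} (hsp : s ≠ p) :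
    ∑ k, ∑ m, epsC m i (update (update v s k) p k p) *
      f (removeAppend (n + 1) (update (update v s k) p k) p m) = 0 := by
  obtain ⟨j, hj⟩ := Fin.exists_succAbove_eq hsp
  simp only [update_self, removeAppend_update_update_self v hj]
  refine sum_sum_epsC_mul_eq_zero_of_symm i _ fun k m => hf.apply_eq_of_entries_eq ?_
  rw [entries_snoc, entries_snoc, cons_entries_update_comm]

lemma sum_epsC_mul_removeAppend_update_update_of_ne {n : ℕ} {f : (Fin (n + 1) → Fin 3) → ℂ}
    (hf : IsTraceless (n + 1) f) (i : Fin 3) (v : Fin (n + 1) → Fin 3)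
    {r s p : Fin (n + 1)} (hrs : r ≠ s) (hrp : r ≠ p) (hsp : s ≠ p) :
    ∑ k, ∑ m, epsC m i (update (update v s k) r k p) *
      f (removeAppend (n + 1) (update (update v s k) r k) p m) = 0 := by
  obtain ⟨jr, hjr⟩ := Fin.exists_succAbove_eq hrp
  obtain ⟨js, hjs⟩ := Fin.exists_succAbove_eq hsp
  have hj : jr.castSucc ≠ js.castSucc := fun h =>
    hrs (by rw [← hjr, ← hjs, Fin.castSucc_inj.mp h])
  simp only [update_of_ne hrp.symm, update_of_ne hsp.symm,
    removeAppend_update_update_of_ne v hjr hjs]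
  rw [Finset.sum_comm]
  simp only [← Finset.mul_sum, isTraceless_iff_sum_update_update.mp hf _ _ hj, mul_zero,
    Finset.sum_const_zero]

theorem isTraceless_dop {l : ℕ} {f : (Fin l → Fin 3) → ℂ} (hsym : IsTotallySymmetric l f)
    (htr : IsTraceless l f) (i : Fin 3) : IsTraceless l (Dop l i f) := by
  rw [isTraceless_iff_sum_update_update]
  intro r s hrs v
  rcases l with _ | n
  · exact r.elim0
  simp only [Dop, Finset.sum_neg_distrib, neg_eq_zero]
  rw [Finset.sum_comm]
  refine Finset.sum_eq_zero fun p _ => ?_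
  rcases eq_or_ne r p with rfl | hrp
  · exact sum_epsC_mul_removeAppend_update_update_self hsym i v hrs.symm
  rcases eq_or_ne s p with rfl | hsp
  · simp_rw [← update_comm hrs]
    exact sum_epsC_mul_removeAppend_update_update_self hsym i v hrs
  · exact sum_epsC_mul_removeAppend_update_update_of_ne htr i v hrs hrp hsp

theorem stmt6_general (l : ℕ) (f : (Fin l → Fin 3) → ℂ)
    (hsym : IsTotallySymmetric l f) (htr : IsTraceless l f) (i : Fin 3) :
    IsTotallySymmetric l (Dop l i f) ∧ IsTraceless l (Dop l i f) :=
  ⟨isTotallySymmetric_dop hsym i, isTraceless_dop hsym htr i⟩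

/-- For `l ≥ 1` and a totally symmetric traceless rank-`l` tensor `f`, each `D_i f` is again
totally symmetric and traceless. -/
theorem stmt6 (l : ℕ) (hl : 1 ≤ l) (f : (Fin l → Fin 3) → ℂ)
    (hsym : IsTotallySymmetric l f) (htr : IsTraceless l f) (i : Fin 3) :
    IsTotallySymmetric l (Dop l i f) ∧ IsTraceless l (Dop l i f) :=
  stmt6_general l f hsym htr i
end
end

section
/- Let l ≥ 1 and let f be a rank-l tensor that is totally symmetric and traceless. Then ∑_{i=1}^{3} D_i (D_i f) = − l(l+1) f. -/
noncomputable section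

/-! ### Auxiliary material -/

def epsZ (i j k : Fin 3) : ℤ :=
  (((i : ℤ) - (j : ℤ)) * ((j : ℤ) - (k : ℤ)) * ((k : ℤ) - (i : ℤ))) / 2

lemma epsC_eq_epsZ (i j k : Fin 3) : epsC i j k = (epsZ i j k : ℂ) := rfl

lemma epsZ_sum : ∀ k a m b : Fin 3,
    ∑ i : Fin 3, epsZ k i a * epsZ m i b =
      (if k = m then 1 else 0) * (if a = b then 1 else 0)
      - (if k = b then 1 else 0) * (if a = m then 1 else 0) := by decide

lemma epsC_sum (k a m b : Fin 3) :
    ∑ i : Fin 3, epsC k i a * epsC m i b =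
      (if k = m then (1:ℂ) else 0) * (if a = b then 1 else 0)
      - (if k = b then (1:ℂ) else 0) * (if a = m then 1 else 0) := by
  have h2 : ((∑ i : Fin 3, epsZ k i a * epsZ m i b : ℤ) : ℂ)
      = (((if k = m then 1 else 0) * (if a = b then 1 else 0)
      - (if k = b then 1 else 0) * (if a = m then 1 else 0) : ℤ) : ℂ) := by
    rw [epsZ_sum]
  push_cast at h2
  simp only [epsC_eq_epsZ]
  convert h2 using 2

def shiftPerm (l : ℕ) (r : Fin l) : Equiv.Perm (Fin l) where
  toFun t := if h : (t : ℕ) + 1 < l then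
      (if (t : ℕ) < (r : ℕ) then t else ⟨(t : ℕ) + 1, h⟩) else r
  invFun t := if (t : ℕ) < (r : ℕ) then t
    else if (r : ℕ) < (t : ℕ) then ⟨(t : ℕ) - 1, Nat.lt_of_le_of_lt (Nat.sub_le _ _) t.isLt⟩
    else ⟨l - 1, Nat.sub_lt (Nat.lt_of_le_of_lt (Nat.zero_le _) r.isLt) Nat.one_pos⟩
  left_inv t := by
    have ht := t.isLt; have hr := r.isLt
    apply Fin.ext
    dsimp only
    simp only [apply_dite Fin.val, apply_ite Fin.val, Fin.val_mk]
    split_ifs <;> omega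
  right_inv t := by
    have ht := t.isLt; have hr := r.isLt
    apply Fin.ext
    dsimp only
    simp only [apply_dite Fin.val, apply_ite Fin.val, Fin.val_mk]
    split_ifs <;> omega

lemma removeAppend_eq (l : ℕ) (v : Fin l → Fin 3) (r : Fin l) (k : Fin 3) :
    removeAppend l v r k = (Function.update v r k) ∘ (shiftPerm l r) := by
  funext t
  have ht := t.isLt; have hr := r.isLt
  simp only [removeAppend, shiftPerm, Function.comp_apply, Equiv.coe_fn_mk,
    Function.update_apply]
  by_cases h1 : (t : ℕ) + 1 < l
  · by_cases h2 : (t : ℕ) < (r : ℕ)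
    · have : ¬ t = r := by simp [Fin.ext_iff]; omega
      simp [h1, h2, this]
    · have : ¬ (⟨(t:ℕ)+1, h1⟩ : Fin l) = r := by simp [Fin.ext_iff]; omega
      simp [h1, h2, this]
  · simp [h1]

lemma update_comp {l : ℕ} (v : Fin l → Fin 3) (σ : Equiv.Perm (Fin l)) (s : Fin l)
    (m : Fin 3) :
    Function.update (v ∘ σ) s m = (Function.update v (σ s) m) ∘ σ := by
  funext t
  simp only [Function.update_apply, Function.comp_apply, EmbeddingLike.apply_eq_iff_eq]

section
variable {l : ℕ} {f : (Fin l → Fin 3) → ℂ}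

lemma Dop_apply (hsym : IsTotallySymmetric l f) (i : Fin 3) (w : Fin l → Fin 3) :
    Dop l i f w = -∑ s : Fin l, ∑ m : Fin 3,
      epsC m i (w s) * f (Function.update w s m) := by
  unfold Dop
  congr 1
  refine Finset.sum_congr rfl fun s _ => Finset.sum_congr rfl fun m _ => ?_
  rw [removeAppend_eq, hsym]

lemma Dop_perm (hsym : IsTotallySymmetric l f) (i : Fin 3) (σ : Equiv.Perm (Fin l))
    (w : Fin l → Fin 3) :
    Dop l i f (w ∘ σ) = Dop l i f w := by
  rw [Dop_apply hsym, Dop_apply hsym]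
  congr 1
  calc ∑ s : Fin l, ∑ m : Fin 3, epsC m i ((w ∘ σ) s) * f (Function.update (w ∘ σ) s m)
      = ∑ s : Fin l, ∑ m : Fin 3, epsC m i (w (σ s)) * f (Function.update w (σ s) m) := by
        refine Finset.sum_congr rfl fun s _ => Finset.sum_congr rfl fun m _ => ?_
        rw [update_comp, hsym]
        rfl
    _ = ∑ s : Fin l, ∑ m : Fin 3, epsC m i (w s) * f (Function.update w s m) :=
        Equiv.sum_comp σ (fun s => ∑ m : Fin 3, epsC m i (w s) * f (Function.update w s m))

end


lemma sum_reorder {M : Type*} [AddCommMonoid M] {α β : Type*} [Fintype α] [Fintype β]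
    (T : β → α → β → α → β → M) :
    ∑ i, ∑ r, ∑ k, ∑ s, ∑ m, T i r k s m = ∑ r, ∑ s, ∑ k, ∑ m, ∑ i, T i r k s m := by
  rw [Finset.sum_comm]
  refine Finset.sum_congr rfl fun r _ => ?_
  calc ∑ i, ∑ k, ∑ s, ∑ m, T i r k s m
      = ∑ i, ∑ s, ∑ k, ∑ m, T i r k s m :=
        Finset.sum_congr rfl fun i _ => Finset.sum_comm
    _ = ∑ s, ∑ i, ∑ k, ∑ m, T i r k s m := Finset.sum_comm
    _ = ∑ s, ∑ k, ∑ m, ∑ i, T i r k s m :=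
        Finset.sum_congr rfl fun s _ =>
          (Finset.sum_comm.trans (Finset.sum_congr rfl fun k _ => Finset.sum_comm))

/-- For `l ≥ 1` and a totally symmetric traceless rank-`l` tensor `f`,
`∑_i D_i (D_i f) = −l(l+1) f`. -/
theorem stmt7 (l : ℕ) (hl : 1 ≤ l) (f : (Fin l → Fin 3) → ℂ)
    (hsym : IsTotallySymmetric l f) (htr : IsTraceless l f) :
    ∑ i : Fin 3, Dop l i (Dop l i f) = fun v => -((l : ℂ) * ((l : ℂ) + 1)) * f v := by
  funext v
  -- Step 1: expand the double application
  have expand : ∀ i : Fin 3, Dop l i (Dop l i f) v =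
      ∑ r : Fin l, ∑ k : Fin 3, ∑ s : Fin l, ∑ m : Fin 3,
        epsC k i (v r) * epsC m i (Function.update v r k s)
          * f (Function.update (Function.update v r k) s m) := by
    intro i
    have h1 : ∀ (r : Fin l) (k : Fin 3),
        Dop l i f (removeAppend l v r k)
          = -∑ s : Fin l, ∑ m : Fin 3, epsC m i (Function.update v r k s)
              * f (Function.update (Function.update v r k) s m) := by
      intro r k
      rw [removeAppend_eq, Dop_perm hsym, Dop_apply hsym]
    show -∑ r : Fin l, ∑ k : Fin 3,
        epsC k i (v r) * Dop l i f (removeAppend l v r k) = _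
    simp only [h1, mul_neg, Finset.sum_neg_distrib, neg_neg, Finset.mul_sum, mul_assoc,
      ← mul_assoc]
  rw [Finset.sum_apply]
  rw [Finset.sum_congr rfl fun i _ => expand i]
  -- Step 2: move the i-sum innermost and reorder (r,k,s,m) → (r,s,k,m)
  rw [sum_reorder]
  have key : ∀ (r s : Fin l),
      (∑ k : Fin 3, ∑ m : Fin 3, ∑ i : Fin 3,
        epsC k i (v r) * epsC m i (Function.update v r k s)
          * f (Function.update (Function.update v r k) s m))
      = if s = r then (-2 : ℂ) * f v else -(f v) := by
    intro r s
    by_cases hsr : s = r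
    · subst hsr
      have hval : ∀ k, Function.update v s k s = k := fun k => Function.update_self s k v
      have hupd : ∀ k m : Fin 3, Function.update (Function.update v s k) s m
          = Function.update v s m := fun k m => by simp
      simp only [hval, hupd]
      have heps : ∀ k m : Fin 3, ∑ i : Fin 3, epsC k i (v s) * epsC m i k * f (Function.update v s m)
          = ((if k = m then (1:ℂ) else 0) * (if v s = k then 1 else 0)
            - (if k = k then (1:ℂ) else 0) * (if v s = m then 1 else 0)) * f (Function.update v s m) := by
        intro k m
        rw [← Finset.sum_mul, epsC_sum]
      simp only [heps, if_pos rfl, one_mul, sub_mul, ite_mul, one_mul, zero_mul,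
        Finset.sum_sub_distrib, Finset.sum_ite_eq, Finset.sum_ite_eq', Finset.mem_univ,
        if_true, Finset.sum_const, Finset.card_univ, Fintype.card_fin]
      simp only [Function.update_eq_self, smul_eq_mul]
      ring
    · -- s ≠ r
      have hval : ∀ k, Function.update v r k s = v s := fun k => Function.update_of_ne hsr k v
      simp only [hval]
      have heps : ∀ k m : Fin 3,
          ∑ i : Fin 3, epsC k i (v r) * epsC m i (v s)
            * f (Function.update (Function.update v r k) s m)
          = ((if k = m then (1:ℂ) else 0) * (if v r = v s then 1 else 0)
            - (if k = v s then (1:ℂ) else 0) * (if v r = m then 1 else 0))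
            * f (Function.update (Function.update v r k) s m) := by
        intro k m
        rw [← Finset.sum_mul, epsC_sum]
      simp only [heps, sub_mul, Finset.sum_sub_distrib]
      have htrace : ∑ k : Fin 3, ∑ m : Fin 3,
          (if k = m then (1:ℂ) else 0) * (if v r = v s then 1 else 0)
            * f (Function.update (Function.update v r k) s m) = 0 := by
        have inner : ∀ k : Fin 3, ∑ m : Fin 3,
            (if k = m then (1:ℂ) else 0) * (if v r = v s then 1 else 0)
              * f (Function.update (Function.update v r k) s m)
            = (if v r = v s then 1 else 0) * f (Function.update (Function.update v r k) s k) := by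
          intro k
          rw [Finset.sum_eq_single k]
          · simp
          · intro m _ hmk; simp [Ne.symm hmk]
          · simp
        simp only [inner]
        rw [← Finset.mul_sum]
        have harg : ∀ k : Fin 3, Function.update (Function.update v r k) s k
            = fun t => if t = s then k else if t = r then k else v t := by
          intro k
          funext t
          simp [Function.update_apply]
        have := htr s r (fun h => hsr h) v
        simp only [harg]
        rw [this, mul_zero]
      rw [htrace, zero_sub]
      have hpick : ∑ k : Fin 3, ∑ m : Fin 3,
          (if k = v s then (1:ℂ) else 0) * (if v r = m then 1 else 0)
            * f (Function.update (Function.update v r k) s m)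
          = f (Function.update (Function.update v r (v s)) s (v r)) := by
        have inner : ∀ k : Fin 3, ∑ m : Fin 3,
            (if k = v s then (1:ℂ) else 0) * (if v r = m then 1 else 0)
              * f (Function.update (Function.update v r k) s m)
            = (if k = v s then (1:ℂ) else 0)
              * f (Function.update (Function.update v r k) s (v r)) := by
          intro k
          rw [Finset.sum_eq_single (v r)]
          · simp
          · intro m _ hmr; simp [Ne.symm hmr]
          · simp
        simp only [inner]
        rw [Finset.sum_eq_single (v s)]
        · simp
        · intro k _ hk; simp [hk]
        · simp
      rw [hpick]
      have hswap : Function.update (Function.update v r (v s)) s (v r)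
          = v ∘ (Equiv.swap r s) := by
        funext t
        simp only [Function.update_apply, Function.comp_apply, Equiv.swap_apply_def]
        by_cases h1 : t = s
        · subst h1; simp [Ne.symm hsr, hsr]
        · by_cases h2 : t = r
          · subst h2; simp [h1]
          · simp [h1, h2]
      rw [hswap, hsym, if_neg hsr]
  rw [Finset.sum_congr rfl fun r _ => Finset.sum_congr rfl fun s _ => key r s]
  -- Step 3: finish the counting
  have hrow : ∀ r : Fin l, ∑ s : Fin l, (if s = r then (-2 : ℂ) * f v else -(f v))
      = -((l : ℂ) + 1) * f v := by
    intro r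
    have : ∀ s : Fin l, (if s = r then (-2 : ℂ) * f v else -(f v))
        = -(f v) + (if s = r then -(f v) else 0) := by
      intro s; split_ifs <;> ring
    simp only [this, Finset.sum_add_distrib, Finset.sum_const, Finset.card_univ,
      Fintype.card_fin, nsmul_eq_mul]
    rw [Finset.sum_ite_eq' Finset.univ r (fun _ => -f v)]
    simp only [Finset.mem_univ, if_true]
    ring
  rw [Finset.sum_congr rfl fun r _ => hrow r]
  simp only [Finset.sum_const, Finset.card_univ, Fintype.card_fin, nsmul_eq_mul]
  ring
end
end

section
/- Let h be a real symmetric invertible 3×3 matrix with inverse entries h^{ij}. Then for all l, i, k ∈ {1,2,3}: (1/2) ∑_{j,n} h^{jl} ( h_{ni} ε_{kjn} + h_{nk} ε_{ijn} ) − (1/2) ε_{lik} = −(1/2) ∑_{m} h^{lm} ( 2 ∑_{n} ε_{mkn} h_{ni} + Tr(h) ε_{mik} ); that is, the connection coefficients H^l_{ik} obtained from the product-geometry solution at A = 0 coincide with the known quantum Levi-Civita connection coefficients of the fuzzy sphere. -/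
/-- Key pointwise identity, linear in the symmetric matrix `h`. -/
lemma key_lemma (h : Fin 3 → Fin 3 → ℝ) (hsymm : ∀ i j, h i j = h j i) (m i k : Fin 3) :
    (∑ n, (h n i * eps k m n + h n k * eps i m n)) - ∑ j, h m j * eps j i k
      = -(2 * ∑ n, eps m k n * h n i + (h 0 0 + h 1 1 + h 2 2) * eps m i k) := by
  have tri : ∀ x : Fin 3, x = 0 ∨ x = 1 ∨ x = 2 := by decide
  simp only [Fin.sum_univ_three]
  rcases tri m with rfl|rfl|rfl <;> rcases tri i with rfl|rfl|rfl <;>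
    rcases tri k with rfl|rfl|rfl <;> norm_num [eps] <;>
    linarith [hsymm 0 1, hsymm 0 2, hsymm 1 2, hsymm 1 0, hsymm 2 0, hsymm 2 1]

/-- The connection coefficients `H^l_{ik}` obtained from the product-geometry solution at
`A = 0` coincide with the known quantum Levi-Civita connection coefficients of the fuzzy
sphere: `(1/2) h^{jl}(h_{ni} ε_{kjn} + h_{nk} ε_{ijn}) − (1/2) ε_{lik}
 = −(1/2) h^{lm}(2 ε_{mkn} h_{ni} + Tr(h) ε_{mik})`. -/
theorem stmt12 (h hinv : Fin 3 → Fin 3 → ℝ)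
    (hsymm : ∀ i j, h i j = h j i)
    (hinv₁ : ∀ i j, ∑ k, h i k * hinv k j = if i = j then 1 else 0)
    (hinv₂ : ∀ i j, ∑ k, hinv i k * h k j = if i = j then 1 else 0)
    (l i k : Fin 3) :
    (1/2) * (∑ j, ∑ n, hinv j l * (h n i * eps k j n + h n k * eps i j n)) - (1/2) * eps l i k
      = -(1/2) * ∑ m, hinv l m *
          (2 * ∑ n, eps m k n * h n i + (h 0 0 + h 1 1 + h 2 2) * eps m i k) := by
  -- symmetry of the inverse matrix
  have hsyminv : ∀ a b : Fin 3, hinv a b = hinv b a := by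
    intro a b
    have c1 : hinv a b = ∑ p, hinv a p * (if b = p then (1:ℝ) else 0) := by simp
    have c2 : ∀ p : Fin 3, (if b = p then (1:ℝ) else 0) = ∑ q, hinv b q * h q p := by
      intro p; rw [hinv₂]
    have c3 : hinv a b = ∑ q, hinv b q * ∑ p, hinv a p * h p q := by
      rw [c1]
      simp only [c2, Finset.mul_sum]
      rw [Finset.sum_comm]
      refine Finset.sum_congr rfl fun q _ => ?_
      refine Finset.sum_congr rfl fun p _ => ?_
      rw [hsymm q p]; ring
    rw [c3]
    simp only [hinv₂]
    simp [eq_comm]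
  -- rewrite the first double sum
  have h1 : (∑ j, ∑ n, hinv j l * (h n i * eps k j n + h n k * eps i j n))
      = ∑ m, hinv l m * (∑ n, (h n i * eps k m n + h n k * eps i m n)) := by
    refine Finset.sum_congr rfl fun j _ => ?_
    rw [hsyminv j l, Finset.mul_sum]
  -- expand eps l i k through the inverse
  have heps : eps l i k = ∑ m, hinv l m * ∑ j, h m j * eps j i k := by
    have e1 : eps l i k = ∑ j, (if l = j then (1:ℝ) else 0) * eps j i k := by simp
    rw [e1]
    have e2 : ∀ j : Fin 3, (if l = j then (1:ℝ) else 0) = ∑ m, hinv l m * h m j := by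
      intro j; rw [hinv₂]
    simp only [e2, Finset.sum_mul]
    rw [Finset.sum_comm]
    refine Finset.sum_congr rfl fun m _ => ?_
    rw [Finset.mul_sum]
    refine Finset.sum_congr rfl fun j _ => ?_
    ring
  rw [h1, heps]
  simp only [Finset.mul_sum, ← Finset.sum_sub_distrib, ← Finset.sum_neg_distrib]
  refine Finset.sum_congr rfl fun m _ => ?_
  have K := key_lemma h hsymm m i k
  simp only [Fin.sum_univ_three] at K ⊢
  linear_combination (1/2) * hinv l m * K
end
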